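/- arXiv:0802.2567 — 9 statements merged into one kernel-verified Lean document; each statement's English description precedes it below -/
import Mathlib

section
/- Let G be a group and let g, x be elements of G such that g has order 2, x has order 3, and the product g*x has order 3. Then the subgroup of G generated by g and x is isomorphic to the alternating group A_4. -/
set_option maxHeartbeats 2000000
set_option maxRecDepth 100000

private theorem mem_twelve {H : Type*} [Group H] (a b : H)
    (haa : a * a = 1) (hbb : b * (b * b) = 1) (hab : (a*b) * ((a*b) * (a*b)) = 1) :
    ∀ y ∈ Subgroup.closure ({a, b} : Set H),
      y ∈ ({1, b, b*b, a, a*b, a*(b*b), b*a, b*(a*b), b*(a*(b*b)),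
            b*(b*a), b*(b*(a*b)), b*(b*(a*(b*b)))} : Set H) := by
  have hb3 : b * b * b = 1 := by rw [mul_assoc]; exact hbb
  have hainv : a⁻¹ = a := inv_eq_of_mul_eq_one_left haa
  have hbinv : b⁻¹ = b * b := inv_eq_of_mul_eq_one_left hb3
  have key : a * b * a = b * b * a * (b * b) := by
    have h1 : (a * b * a) * (b * a * b) = 1 := by rw [← hab]; group
    have h2 : a * b * a = (b * a * b)⁻¹ := eq_inv_of_mul_eq_one_left h1
    rw [h2]
    symm
    refine eq_inv_of_mul_eq_one_left ?_
    calc (b*b*a*(b*b))*(b*a*b) = b*b*a*(b*b*b)*a*b := by group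
      _ = b*b*(a*a)*b := by rw [hb3, mul_one]; group
      _ = b*(b*b) := by rw [haa, mul_one]; group
      _ = 1 := hbb
  have key2 : a * (b * b) * a = b * a * b := by
    have h0 : a⁻¹ * b⁻¹ * a⁻¹ = (a * b * a)⁻¹ := by group
    rw [hainv, hbinv] at h0
    rw [h0, key]
    symm
    refine eq_inv_of_mul_eq_one_left ?_
    calc (b*a*b)*(b*b*a*(b*b)) = b*a*(b*b*b)*(a*(b*b)) := by group
      _ = b*(a*a)*(b*b) := by rw [hb3, mul_one]; group
      _ = b*(b*b) := by rw [haa, mul_one]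
      _ = 1 := hbb
  have A1 : ∀ y : H, a * (a * y) = y := fun y => by rw [← mul_assoc, haa, one_mul]
  have B1 : ∀ y : H, b * (b * (b * y)) = y := fun y => by
    rw [← mul_assoc, ← mul_assoc, hb3, one_mul]
  have K : ∀ y : H, a * (b * (a * y)) = b * (b * (a * (b * (b * y)))) := fun y => by
    calc a * (b * (a * y)) = (a * b * a) * y := by group
      _ = (b * b * a * (b * b)) * y := by rw [key]
      _ = b * (b * (a * (b * (b * y)))) := by group
  have K2 : ∀ y : H, a * (b * (b * (a * y))) = b * (a * (b * y)) := fun y => by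
    calc a * (b * (b * (a * y))) = (a * (b * b) * a) * y := by group
      _ = (b * a * b) * y := by rw [key2]
      _ = b * (a * (b * y)) := by group
  have K0 : a * (b * a) = b * (b * (a * (b * b))) := by simpa using K 1
  have K20 : a * (b * (b * a)) = b * (a * b) := by simpa using K2 1
  have stepA : ∀ y : H, y ∈ ({1, b, b*b, a, a*b, a*(b*b), b*a, b*(a*b), b*(a*(b*b)),
            b*(b*a), b*(b*(a*b)), b*(b*(a*(b*b)))} : Set H) →
      a * y ∈ ({1, b, b*b, a, a*b, a*(b*b), b*a, b*(a*b), b*(a*(b*b)),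
            b*(b*a), b*(b*(a*b)), b*(b*(a*(b*b)))} : Set H) := by
    intro y hy
    rcases hy with rfl|rfl|rfl|rfl|rfl|rfl|rfl|rfl|rfl|rfl|rfl|rfl <;>
      simp only [K0, K20, A1, B1, K, K2, haa, hbb, mul_one, Set.mem_insert_iff,
        Set.mem_singleton_iff, eq_self_iff_true, true_or, or_true]
  have stepB : ∀ y : H, y ∈ ({1, b, b*b, a, a*b, a*(b*b), b*a, b*(a*b), b*(a*(b*b)),
            b*(b*a), b*(b*(a*b)), b*(b*(a*(b*b)))} : Set H) →
      b * y ∈ ({1, b, b*b, a, a*b, a*(b*b), b*a, b*(a*b), b*(a*(b*b)),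
            b*(b*a), b*(b*(a*b)), b*(b*(a*(b*b)))} : Set H) := by
    intro y hy
    rcases hy with rfl|rfl|rfl|rfl|rfl|rfl|rfl|rfl|rfl|rfl|rfl|rfl <;>
      simp only [K0, K20, A1, B1, K, K2, haa, hbb, mul_one, Set.mem_insert_iff,
        Set.mem_singleton_iff, eq_self_iff_true, true_or, or_true]
  intro y hy
  induction hy using Subgroup.closure_induction_left with
  | one => simp
  | mul_left z hz w hw ih =>
    rcases hz with rfl | hz
    · exact stepA _ ih
    · rcases hz with rfl
      exact stepB _ ih
  | inv_mul_cancel z hz w hw ih =>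
    rcases hz with rfl | hz
    · rw [hainv]; exact stepA _ ih
    · rcases hz with rfl
      rw [hbinv, mul_assoc]
      exact stepB _ (stepB _ ih)

private instance altDec : DecidablePred (· ∈ alternatingGroup (Fin 4)) :=
  fun p => decidable_of_iff _ (Equiv.Perm.mem_alternatingGroup (f := p)).symm

private def s4 : alternatingGroup (Fin 4) :=
  ⟨Equiv.swap 0 1 * Equiv.swap 2 3, by rw [Equiv.Perm.mem_alternatingGroup]; decide⟩

private def t4 : alternatingGroup (Fin 4) :=
  ⟨Equiv.swap 0 1 * Equiv.swap 1 2, by rw [Equiv.Perm.mem_alternatingGroup]; decide⟩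

private def myrels : Set (FreeGroup Bool) :=
  {FreeGroup.of false * FreeGroup.of false,
   FreeGroup.of true * (FreeGroup.of true * FreeGroup.of true),
   (FreeGroup.of false * FreeGroup.of true) *
     ((FreeGroup.of false * FreeGroup.of true) * (FreeGroup.of false * FreeGroup.of true))}

private theorem twelve_list : ∀ y : alternatingGroup (Fin 4),
    y = 1 ∨ y = t4 ∨ y = t4*t4 ∨ y = s4 ∨ y = s4*t4 ∨ y = s4*t4*t4 ∨
    y = t4*s4 ∨ y = t4*s4*t4 ∨ y = t4*s4*t4*t4 ∨ y = t4*t4*s4 ∨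
    y = t4*t4*s4*t4 ∨ y = t4*t4*s4*t4*t4 := by decide

private theorem conj_prod_eq_s4 : ∀ y : alternatingGroup (Fin 4), y ≠ 1 →
    ∃ z1 z2 z3 : alternatingGroup (Fin 4),
      (z1*y*z1⁻¹)*((z2*y*z2⁻¹)*(z3*y*z3⁻¹)) = s4 := by decide

private theorem card_A4 : Fintype.card (alternatingGroup (Fin 4)) = 12 := by decide

/-- If `g` has order 2, `x` has order 3 and `g * x` has order 3, then the
subgroup generated by `g` and `x` is isomorphic to the alternating group `A₄`. -/
theorem closure_iso_alternatingGroup_of_orders {G : Type*} [Group G] (g x : G)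
    (hg : orderOf g = 2) (hx : orderOf x = 3) (hgx : orderOf (g * x) = 3) :
    Nonempty ((Subgroup.closure {g, x} : Subgroup G) ≃* alternatingGroup (Fin 4)) := by
  classical
  -- relations in G
  have hgg : g * g = 1 := by
    have h := pow_orderOf_eq_one g; rwa [hg, pow_two] at h
  have hxx : x * (x * x) = 1 := by
    have h := pow_orderOf_eq_one x
    rw [hx, pow_succ, pow_succ, pow_one] at h
    rwa [← mul_assoc]
  have hgxgx : (g*x) * ((g*x) * (g*x)) = 1 := by
    have h := pow_orderOf_eq_one (g*x)
    rw [hgx, pow_succ, pow_succ, pow_one] at h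
    rwa [← mul_assoc]
  -- the homomorphism to G
  have hrelG : ∀ r ∈ myrels, FreeGroup.lift (fun c : Bool => if c then x else g) r = 1 := by
    intro r hr
    rcases hr with rfl | rfl | rfl <;>
      simp only [map_mul, FreeGroup.lift_apply_of, if_true, if_false, Bool.cond_true] <;>
      [exact hgg; exact hxx; exact hgxgx]
  let φ : PresentedGroup myrels →* G := PresentedGroup.toGroup hrelG
  have hφa : φ (PresentedGroup.of false) = g := PresentedGroup.toGroup.of hrelG
  have hφb : φ (PresentedGroup.of true) = x := PresentedGroup.toGroup.of hrelG
  -- the homomorphism to A4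
  have hrelA : ∀ r ∈ myrels,
      FreeGroup.lift (fun c : Bool => if c then t4 else s4) r = 1 := by
    intro r hr
    rcases hr with rfl | rfl | rfl <;>
      simp only [map_mul, FreeGroup.lift_apply_of, if_true, if_false] <;>
      rw [Subtype.ext_iff] <;> decide
  let ψ : PresentedGroup myrels →* alternatingGroup (Fin 4) := PresentedGroup.toGroup hrelA
  have hψa : ψ (PresentedGroup.of false) = s4 := PresentedGroup.toGroup.of hrelA
  have hψb : ψ (PresentedGroup.of true) = t4 := PresentedGroup.toGroup.of hrelA
  -- the presented group is generated by a and b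
  have hrange : Set.range (PresentedGroup.of : Bool → PresentedGroup myrels) =
      {PresentedGroup.of false, PresentedGroup.of true} := by
    ext z
    constructor
    · rintro ⟨(_|_), rfl⟩
      · exact Set.mem_insert _ _
      · exact Set.mem_insert_iff.mpr (Or.inr rfl)
    · rintro (rfl | rfl)
      · exact ⟨false, rfl⟩
      · exact ⟨true, rfl⟩
  have htop : Subgroup.closure ({PresentedGroup.of false, PresentedGroup.of true} :
      Set (PresentedGroup myrels)) = ⊤ := by
    rw [← hrange]; exact PresentedGroup.closure_range_of myrels
  -- relations hold in the presented group
  have hrel1 : ∀ r ∈ myrels, PresentedGroup.mk myrels r = 1 := fun r hr =>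
    (QuotientGroup.eq_one_iff r).mpr (Subgroup.subset_normalClosure hr)
  set a : PresentedGroup myrels := PresentedGroup.of false with ha
  set b : PresentedGroup myrels := PresentedGroup.of true with hb
  have haaP : a * a = 1 := by
    have h := hrel1 _ (show _ ∈ myrels from Set.mem_insert _ _)
    simp only [map_mul] at h; exact h
  have hbbP : b * (b * b) = 1 := by
    have h := hrel1 _ (show FreeGroup.of true * (FreeGroup.of true * FreeGroup.of true) ∈ myrels
      from Set.mem_insert_iff.mpr (Or.inr (Set.mem_insert _ _)))
    simp only [map_mul] at h; exact h
  have habP : (a*b) * ((a*b) * (a*b)) = 1 := by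
    have h := hrel1 _ (show (FreeGroup.of false * FreeGroup.of true) *
        ((FreeGroup.of false * FreeGroup.of true) * (FreeGroup.of false * FreeGroup.of true))
        ∈ myrels from Set.mem_insert_iff.mpr (Or.inr (Set.mem_insert_iff.mpr (Or.inr rfl))))
    simp only [map_mul] at h; exact h
  -- the presented group is finite with at most 12 elements
  have hmem : ∀ y : PresentedGroup myrels,
      y ∈ ({1, b, b*b, a, a*b, a*(b*b), b*a, b*(a*b), b*(a*(b*b)),
            b*(b*a), b*(b*(a*b)), b*(b*(a*(b*b)))} : Set (PresentedGroup myrels)) := by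
    intro y
    refine mem_twelve a b haaP hbbP habP y ?_
    rw [ha, hb, htop]; trivial
  have hfin : Finite (PresentedGroup myrels) := by
    rw [← Set.finite_univ_iff]
    refine Set.Finite.subset ?_ (fun y _ => hmem y)
    apply Set.Finite.insert; apply Set.Finite.insert; apply Set.Finite.insert
    apply Set.Finite.insert; apply Set.Finite.insert; apply Set.Finite.insert
    apply Set.Finite.insert; apply Set.Finite.insert; apply Set.Finite.insert
    apply Set.Finite.insert; apply Set.Finite.insert; exact Set.finite_singleton _
  haveI := hfin
  haveI : Fintype (PresentedGroup myrels) := Fintype.ofFinite _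
  -- cardinality bound
  have hcardle : Fintype.card (PresentedGroup myrels) ≤ 12 := by
    have hsurj : Function.Surjective
        (![1, b, b*b, a, a*b, a*(b*b), b*a, b*(a*b), b*(a*(b*b)),
           b*(b*a), b*(b*(a*b)), b*(b*(a*(b*b)))] : Fin 12 → PresentedGroup myrels) := by
      intro y
      rcases hmem y with rfl|rfl|rfl|rfl|rfl|rfl|rfl|rfl|rfl|rfl|rfl|rfl
      exacts [⟨0, rfl⟩, ⟨1, rfl⟩, ⟨2, rfl⟩, ⟨3, rfl⟩, ⟨4, rfl⟩, ⟨5, rfl⟩,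
        ⟨6, rfl⟩, ⟨7, rfl⟩, ⟨8, rfl⟩, ⟨9, rfl⟩, ⟨10, rfl⟩, ⟨11, rfl⟩]
    calc Fintype.card (PresentedGroup myrels) ≤ Fintype.card (Fin 12) :=
          Fintype.card_le_of_surjective _ hsurj
      _ = 12 := Fintype.card_fin 12
  -- surjectivity of ψ
  have hgen : ∀ y : alternatingGroup (Fin 4), y ∈ Subgroup.closure ({s4, t4} :
      Set (alternatingGroup (Fin 4))) := by
    intro y
    have hs : s4 ∈ Subgroup.closure ({s4, t4} : Set (alternatingGroup (Fin 4))) :=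
      Subgroup.subset_closure (Set.mem_insert _ _)
    have ht : t4 ∈ Subgroup.closure ({s4, t4} : Set (alternatingGroup (Fin 4))) :=
      Subgroup.subset_closure (Set.mem_insert_iff.mpr (Or.inr rfl))
    rcases twelve_list y with rfl|rfl|rfl|rfl|rfl|rfl|rfl|rfl|rfl|rfl|rfl|rfl
    · exact one_mem _
    · exact ht
    · exact mul_mem ht ht
    · exact hs
    · exact mul_mem hs ht
    · exact mul_mem (mul_mem hs ht) ht
    · exact mul_mem ht hs
    · exact mul_mem (mul_mem ht hs) ht
    · exact mul_mem (mul_mem (mul_mem ht hs) ht) ht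
    · exact mul_mem (mul_mem ht ht) hs
    · exact mul_mem (mul_mem (mul_mem ht ht) hs) ht
    · exact mul_mem (mul_mem (mul_mem (mul_mem ht ht) hs) ht) ht
  have hψsurj : Function.Surjective ψ := by
    intro y
    have h1 : Subgroup.closure ({s4, t4} : Set (alternatingGroup (Fin 4))) ≤ ψ.range := by
      rw [Subgroup.closure_le]
      rintro z (rfl | rfl)
      · exact ⟨a, hψa⟩
      · exact ⟨b, hψb⟩
    exact h1 (hgen y)
  -- ψ is bijective
  have hψbij : Function.Bijective ψ := by
    rw [Fintype.bijective_iff_surjective_and_card]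
    refine ⟨hψsurj, le_antisymm ?_ ?_⟩
    · rw [card_A4]; exact hcardle
    · exact Fintype.card_le_of_surjective ψ hψsurj
  let e : PresentedGroup myrels ≃* alternatingGroup (Fin 4) := MulEquiv.ofBijective ψ hψbij
  have he : ∀ p, e p = ψ p := fun p => rfl
  -- φ is injective
  have hφker : ∀ p : PresentedGroup myrels, φ p = 1 → p = 1 := by
    intro p hp
    by_contra hne
    have hy : e p ≠ 1 := fun h => hne (e.injective (by rw [h, map_one]))
    obtain ⟨z1, z2, z3, hz⟩ := conj_prod_eq_s4 (e p) hy
    set q : PresentedGroup myrels :=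
      (e.symm z1 * p * (e.symm z1)⁻¹) *
        ((e.symm z2 * p * (e.symm z2)⁻¹) * (e.symm z3 * p * (e.symm z3)⁻¹)) with hq
    have heq : e q = s4 := by
      rw [hq]
      simp only [map_mul, map_inv, MulEquiv.apply_symm_apply]
      exact hz
    have hea : e a = s4 := by rw [he, hψa]
    have hqa : q = a := e.injective (by rw [heq, hea])
    have : φ q = 1 := by
      rw [hq]
      simp only [map_mul, map_inv, hp, mul_one, mul_inv_cancel, one_mul]
    rw [hqa, hφa] at this
    rw [this, orderOf_one] at hg
    exact absurd hg (by norm_num)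
  have hφinj : Function.Injective φ := (injective_iff_map_eq_one φ).mpr hφker
  -- the range of φ is the closure of {g, x}
  have hφrange : φ.range = Subgroup.closure ({g, x} : Set G) := by
    rw [MonoidHom.range_eq_map, ← htop, MonoidHom.map_closure,
      Set.image_insert_eq, Set.image_singleton, hφa, hφb]
  exact ⟨((MulEquiv.subgroupCongr hφrange.symm).trans
    (MonoidHom.ofInjective hφinj).symm).trans e⟩
end

section
/- For every odd prime p there exist elements a, b, c of SL(2,F_p) with a of order 3, b of order 3, c of order 4, and a*b*c = 1. -/
/-!
By Cayley–Hamilton an element of `SL(2, R)` with trace `-1` satisfies `A² + A + 1 = 0`, so it has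
order `3` unless it is trivial, and one with trace `0` satisfies `A² = -1`, so it has order `4` once
`2 ≠ 0`. As `tr A⁻¹ = tr A` in `SL(2, R)`, it suffices to find `a` with `tr a = tr (c a) = -1` for
`c = !![0, -1; 1, 0]` and to put `b = (c a)⁻¹`. These conditions on `a` amount to writing `-2` as a
sum of two squares, which is always possible in `F_p`.
-/

open Matrix
open scoped MatrixGroups

theorem Matrix.sq_eq_trace_smul_sub_det_smul_one {R : Type*} [CommRing R]
    (A : Matrix (Fin 2) (Fin 2) R) : A ^ 2 = A.trace • A - A.det • 1 := by
  ext i j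
  fin_cases i <;> fin_cases j <;>
    simp [sq, mul_apply, trace_fin_two, det_fin_two] <;> ring

namespace Matrix.SpecialLinearGroup

variable {R : Type*} [CommRing R]

local notation:1024 "↑ₘ" A:1024 => ((A : SL(2, R)) : Matrix (Fin 2) (Fin 2) R)

theorem coe_sq_eq_trace_smul_sub_one (A : SL(2, R)) : ↑ₘA ^ 2 = trace ↑ₘA • ↑ₘA - 1 := by
  rw [sq_eq_trace_smul_sub_det_smul_one, det_coe, one_smul]

theorem SL2_trace_inv (A : SL(2, R)) : trace ↑ₘA⁻¹ = trace ↑ₘA := by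
  rw [coe_inv, adjugate_fin_two, trace_fin_two_of, trace_fin_two, add_comm]

theorem pow_three_eq_one_of_trace_eq_neg_one {A : SL(2, R)} (h : trace ↑ₘA = -1) :
    A ^ 3 = 1 := by
  have hsq := coe_sq_eq_trace_smul_sub_one A
  rw [h, neg_one_smul] at hsq
  apply Subtype.ext
  rw [coe_pow, coe_one, pow_succ, hsq]
  calc (-↑ₘA - 1) * ↑ₘA = -↑ₘA ^ 2 - ↑ₘA := by noncomm_ring
    _ = 1 := by rw [hsq]; abel

theorem orderOf_eq_three_of_trace_eq_neg_one {A : SL(2, R)} (h : trace ↑ₘA = -1)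
    (hA : A ≠ 1) : orderOf A = 3 :=
  orderOf_eq_prime (pow_three_eq_one_of_trace_eq_neg_one h) hA

theorem coe_sq_eq_neg_one_of_trace_eq_zero {A : SL(2, R)} (h : trace ↑ₘA = 0) :
    ↑ₘA ^ 2 = -1 := by
  rw [coe_sq_eq_trace_smul_sub_one, h, zero_smul, zero_sub]

theorem orderOf_eq_four_of_trace_eq_zero (h2 : (2 : R) ≠ 0) {A : SL(2, R)}
    (h : trace ↑ₘA = 0) : orderOf A = 4 := by
  have hsq := coe_sq_eq_neg_one_of_trace_eq_zero h
  refine orderOf_eq_prime_pow (p := 2) (n := 1) (fun hA => h2 ?_) ?_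
  · have hneg : (-1 : Matrix (Fin 2) (Fin 2) R) = 1 := by
      rw [← hsq, ← coe_pow, ← coe_one, ← hA, pow_one]
    simpa [one_add_one_eq_two, neg_eq_iff_add_eq_zero] using congrFun (congrFun hneg 0) 0
  · apply Subtype.ext
    rw [coe_pow, coe_one, pow_succ, pow_one, pow_mul, hsq, neg_one_sq]

theorem exists_trace_eq_neg_one_of_sq_add_sq_eq_neg_two [Invertible (2 : R)]
    {s t : R} (hst : s ^ 2 + t ^ 2 = -2) :
    ∃ a c : SL(2, R), trace ↑ₘa = -1 ∧ trace ↑ₘc = 0 ∧ trace ↑ₘ(c * a) = -1 := by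
  -- `a = !![x, y; z, w]` needs `x + w = -1`, `y - z = -1` and `xw - yz = 1`; the last becomes
  -- `(2x + 1)² + (2y + 1)² = -2` after eliminating `z, w`.
  set u : R := ⅟2
  have hu : 2 * u = 1 := mul_invOf_self 2
  have hdet : det !![u * (t - 1), u * (s - 1); u * (s + 1), -u * (t + 1)] = 1 := by
    rw [det_fin_two_of]
    linear_combination (-(u * u)) * hst + (2 * u + 1) * hu
  let a : SL(2, R) := ⟨_, hdet⟩
  let c : SL(2, R) := ⟨!![0, -1; 1, 0], by simp⟩
  refine ⟨a, c, ?_, ?_, ?_⟩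
  · rw [coe_mk, trace_fin_two_of]
    linear_combination -hu
  · rw [coe_mk, trace_fin_two_of, add_zero]
  · rw [coe_mul, coe_mk, coe_mk, mul_fin_two, trace_fin_two_of]
    linear_combination -hu

theorem exists_orderOf_eq_three_three_four_of_trace (h2 : (2 : R) ≠ 0) {a c : SL(2, R)}
    (ha : trace ↑ₘa = -1) (hc : trace ↑ₘc = 0) (hca : trace ↑ₘ(c * a) = -1) :
    ∃ a b c : SL(2, R), orderOf a = 3 ∧ orderOf b = 3 ∧ orderOf c = 4 ∧ a * b * c = 1 := by
  have : Nontrivial R := nontrivial_of_ne 2 0 h2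
  have h0 : (0 : R) ≠ -1 := (neg_ne_zero.mpr one_ne_zero).symm
  refine ⟨a, (c * a)⁻¹, c, orderOf_eq_three_of_trace_eq_neg_one ha ?_,
    orderOf_eq_three_of_trace_eq_neg_one (by rwa [SL2_trace_inv]) ?_,
    orderOf_eq_four_of_trace_eq_zero h2 hc, by group⟩
  · rintro rfl
    rw [mul_one, hc] at hca
    exact h0 hca
  · intro hb
    rw [inv_eq_one] at hb
    rw [eq_inv_of_mul_eq_one_right hb, SL2_trace_inv, hc] at ha
    exact h0 ha

end Matrix.SpecialLinearGroup

/-- For every odd prime p there exist elements a, b, c of SL(2, F_p) of orders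
3, 3 and 4 respectively with a * b * c = 1. -/
theorem exists_elements_orders_three_three_four (p : ℕ) (hp : p.Prime) (hodd : p ≠ 2) :
    ∃ a b c : Matrix.SpecialLinearGroup (Fin 2) (ZMod p),
      orderOf a = 3 ∧ orderOf b = 3 ∧ orderOf c = 4 ∧ a * b * c = 1 := by
  have : Fact p.Prime := ⟨hp⟩
  have h2 : (2 : ZMod p) ≠ 0 := Ring.two_ne_zero (by rwa [ZMod.ringChar_zmod_n])
  have : Invertible (2 : ZMod p) := invertibleOfNonzero h2
  obtain ⟨s, t, hst⟩ := ZMod.sq_add_sq p (-2)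
  obtain ⟨a, c, ha, hc, hca⟩ :=
    Matrix.SpecialLinearGroup.exists_trace_eq_neg_one_of_sq_add_sq_eq_neg_two hst
  exact Matrix.SpecialLinearGroup.exists_orderOf_eq_three_three_four_of_trace h2 ha hc hca
end

section
/- For every power q of an odd prime, there exists an injective group homomorphism from SL(2,F_3) into SL(2,F_q); that is, SL(2,F_q) has a subgroup isomorphic to SL(2,F_3). -/
/-!
`SL(2, 𝔽₃)` is the binary tetrahedral group: reduction mod 3 identifies it with the 24 Hurwitz
units `±1, ±i, ±j, ±k, (±1 ± i ± j ± k)/2`. Over a field `F` with `2 ≠ 0` in which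
`a² + b² = -1` (solvable in every finite field), the quaternions split, `ℍ → M₂(F)`, and the
reduced norm becomes the determinant, so the Hurwitz units land in `SL(2, F)`. To stay over `ℤ`
we work with the doubled units `2u` and divide by `2` in `F`. The kernel is trivial because a
doubled unit other than `2` differs from `2` in a coordinate dividing `4`, which stays nonzero
in `F`.
-/

open Quaternion Matrix MatrixGroups

instance Quaternion.instDecidableEq {R : Type*} [Zero R] [One R] [Neg R] [DecidableEq R] :
    DecidableEq ℍ[R] :=
  (Quaternion.equivProd R).decidableEq

theorem FiniteField.two_ne_zero_of_odd_card {F : Type*} [Field F] [Fintype F]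
    (hq : Odd (Fintype.card F)) : (2 : F) ≠ 0 :=
  Ring.two_ne_zero fun h => by
    simpa [Nat.odd_iff.mp hq] using FiniteField.even_card_of_char_two h

theorem FiniteField.exists_sq_add_sq_eq (F : Type*) [Field F] [Finite F] (x : ℤ) :
    ∃ a b : F, a ^ 2 + b ^ 2 = x := by
  obtain ⟨p, _⟩ := CharP.exists F
  have : NeZero p := ⟨CharP.char_ne_zero_of_finite F p⟩
  obtain ⟨a, b, h⟩ := CharP.sq_add_sq F p x
  exact ⟨a, b, h⟩

/-- `(x, y, z, w)` are the coordinates of `g` under the splitting `Matrix.ofQuaternion 1 1` over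
`𝔽₃`, and the result is `2u` for the Hurwitz unit `u` reducing to them mod 3. As
`x² + y² + z² + w² = det g = 1` in `𝔽₃`, either exactly one or all four coordinates are nonzero,
and `u` is accordingly one of `±1, ±i, ±j, ±k` or of the form `(±1 ± i ± j ± k)/2`. -/
def hurwitzLift (g : SL(2, ZMod 3)) : ℍ[ℤ] :=
  let x := 2 * (g 0 0 + g 1 1)
  let y := g 0 0 - g 1 1 + g 0 1 + g 1 0
  let z := 2 * (g 1 0 - g 0 1)
  let w := g 0 0 - g 1 1 - g 0 1 - g 1 0
  if x * y = 0 then ⟨2 * x.valMinAbs, 2 * y.valMinAbs, 2 * z.valMinAbs, 2 * w.valMinAbs⟩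
  else ⟨-x.valMinAbs, -y.valMinAbs, -z.valMinAbs, -w.valMinAbs⟩

theorem normSq_hurwitzLift : ∀ g, normSq (hurwitzLift g) = 4 := by
  decide

theorem hurwitzLift_mul : ∀ g h, hurwitzLift g * hurwitzLift h = 2 * hurwitzLift (g * h) := by
  decide

/-- The coordinate `re - 2` alone would not do: it is `-3` for `u = (-1 ± i ± j ± k)/2`. -/
theorem hurwitzLift_sub_two_dvd_four :
    ∀ g, g ≠ 1 → (hurwitzLift g - 2).re ∣ 4 ∨ (hurwitzLift g - 2).imI ∣ 4 := by
  decide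

namespace Matrix

section CommRing

variable {R : Type*} [CommRing R] (a b : R) (hab : a ^ 2 + b ^ 2 = -1)

def quaternionBasis : QuaternionAlgebra.Basis (Matrix (Fin 2) (Fin 2) R) (-1 : ℤ) 0 (-1) where
  i := !![a, b; b, -a]
  j := !![0, -1; 1, 0]
  k := !![b, -a; -a, -b]
  i_mul_i := by
    rw [mul_fin_two, one_fin_two]
    ext i j; fin_cases i <;> fin_cases j <;> simp [← hab] <;> ring
  j_mul_j := by
    rw [mul_fin_two, one_fin_two]
    ext i j; fin_cases i <;> fin_cases j <;> simp
  i_mul_j := by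
    rw [mul_fin_two]
    ext i j; fin_cases i <;> fin_cases j <;> simp
  j_mul_i := by
    rw [mul_fin_two]
    ext i j; fin_cases i <;> fin_cases j <;> simp

def ofQuaternion : ℍ[ℤ] →ₐ[ℤ] Matrix (Fin 2) (Fin 2) R :=
  (quaternionBasis a b hab).liftHom

theorem ofQuaternion_apply (q : ℍ[ℤ]) :
    ofQuaternion a b hab q =
      !![q.re + q.imI * a + q.imK * b, q.imI * b - q.imJ - q.imK * a;
         q.imI * b + q.imJ - q.imK * a, q.re - q.imI * a - q.imK * b] := by
  change algebraMap ℤ _ q.re + q.imI • !![a, b; b, -a] + q.imJ • !![0, -1; 1, 0]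
    + q.imK • !![b, -a; -a, -b] = _
  rw [Algebra.algebraMap_eq_smul_one, one_fin_two]
  ext i j
  fin_cases i <;> fin_cases j <;> simp <;> ring

theorem det_ofQuaternion (q : ℍ[ℤ]) : (ofQuaternion a b hab q).det = normSq q := by
  rw [ofQuaternion_apply, det_fin_two_of, normSq_def']
  push_cast
  linear_combination (-((q.imI : R) ^ 2 + (q.imK : R) ^ 2)) * hab

end CommRing

theorem intCast_coords_eq_zero_of_ofQuaternion_eq_zero {F : Type*} [Field F] {a b : F}
    {hab : a ^ 2 + b ^ 2 = -1} (h2 : (2 : F) ≠ 0) {q : ℍ[ℤ]} (hq : ofQuaternion a b hab q = 0) :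
    (q.re : F) = 0 ∧ (q.imI : F) = 0 ∧ (q.imJ : F) = 0 ∧ (q.imK : F) = 0 := by
  rw [ofQuaternion_apply] at hq
  have e00 : (q.re : F) + q.imI * a + q.imK * b = 0 := by simpa using congrFun (congrFun hq 0) 0
  have e01 : (q.imI : F) * b - q.imJ - q.imK * a = 0 := by simpa using congrFun (congrFun hq 0) 1
  have e10 : (q.imI : F) * b + q.imJ - q.imK * a = 0 := by simpa using congrFun (congrFun hq 1) 0
  have e11 : (q.re : F) - q.imI * a - q.imK * b = 0 := by simpa using congrFun (congrFun hq 1) 1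
  have hre : (q.re : F) = 0 := by
    have : 2 * (q.re : F) = 0 := by linear_combination e00 + e11
    simpa [h2] using this
  have hJ : (q.imJ : F) = 0 := by
    have : 2 * (q.imJ : F) = 0 := by linear_combination e10 - e01
    simpa [h2] using this
  refine ⟨hre, ?_, hJ, ?_⟩
  · linear_combination (-a) * e00 + (-b) * e01 + (q.imI : F) * hab + a * hre + (-b) * hJ
  · linear_combination (-b) * e00 + a * e01 + (q.imK : F) * hab + b * hre + a * hJ

end Matrix

section HurwitzHom

variable {F : Type*} [Field F] (a b : F) (hab : a ^ 2 + b ^ 2 = -1)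

noncomputable def hurwitzMatrix (g : SL(2, ZMod 3)) : Matrix (Fin 2) (Fin 2) F :=
  (2 : F)⁻¹ • ofQuaternion a b hab (hurwitzLift g)

variable {a b hab}

theorem det_hurwitzMatrix (h2 : (2 : F) ≠ 0) (g : SL(2, ZMod 3)) :
    (hurwitzMatrix a b hab g).det = 1 := by
  rw [hurwitzMatrix, det_smul, det_ofQuaternion, normSq_hurwitzLift, Fintype.card_fin, inv_pow]
  push_cast
  field_simp
  norm_num

theorem hurwitzMatrix_mul (g h : SL(2, ZMod 3)) :
    hurwitzMatrix a b hab (g * h) = hurwitzMatrix a b hab g * hurwitzMatrix a b hab h := by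
  rw [hurwitzMatrix, hurwitzMatrix, hurwitzMatrix, smul_mul_smul_comm, ← map_mul, hurwitzLift_mul,
    map_mul, map_ofNat, two_mul, ← two_smul F, smul_smul]
  field_simp

theorem eq_one_of_hurwitzMatrix_eq_one (h2 : (2 : F) ≠ 0) {g : SL(2, ZMod 3)}
    (hg : hurwitzMatrix a b hab g = 1) : g = 1 := by
  by_contra hne
  have hzero : ofQuaternion a b hab (hurwitzLift g - 2) = 0 := by
    rw [map_sub, map_ofNat, sub_eq_zero, (inv_smul_eq_iff₀ h2).mp hg, two_smul, one_add_one_eq_two]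
  obtain ⟨hre, hI, -, -⟩ := intCast_coords_eq_zero_of_ofQuaternion_eq_zero h2 hzero
  have h4 : ((4 : ℤ) : F) ≠ 0 := by
    rw [show ((4 : ℤ) : F) = 2 * 2 by norm_num]
    exact mul_ne_zero h2 h2
  rcases hurwitzLift_sub_two_dvd_four g hne with hdvd | hdvd
  · exact ne_zero_of_dvd_ne_zero h4 (Int.cast_dvd_cast _ _ hdvd) hre
  · exact ne_zero_of_dvd_ne_zero h4 (Int.cast_dvd_cast _ _ hdvd) hI

variable (a b hab) in
noncomputable def hurwitzHom (h2 : (2 : F) ≠ 0) : SL(2, ZMod 3) →* SL(2, F) :=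
  MonoidHom.mk' (fun g => ⟨hurwitzMatrix a b hab g, det_hurwitzMatrix h2 g⟩)
    fun g h => Subtype.ext (hurwitzMatrix_mul g h)

theorem hurwitzHom_injective (h2 : (2 : F) ≠ 0) : Function.Injective (hurwitzHom a b hab h2) :=
  (injective_iff_map_eq_one _).mpr fun _ hg =>
    eq_one_of_hurwitzMatrix_eq_one h2 (congrArg Subtype.val hg)

end HurwitzHom

/-- For every power q of an odd prime, SL(2, F₃) embeds into SL(2, F_q). -/
theorem exists_injective_SL2_F3_to_SL2 {F : Type*} [Field F] [Fintype F]
    (hq : Odd (Fintype.card F)) :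
    ∃ f : Matrix.SpecialLinearGroup (Fin 2) (ZMod 3) →*
        Matrix.SpecialLinearGroup (Fin 2) F, Function.Injective f := by
  obtain ⟨a, b, hab⟩ := FiniteField.exists_sq_add_sq_eq F (-1)
  push_cast at hab
  exact ⟨_, hurwitzHom_injective (hab := hab) (FiniteField.two_ne_zero_of_odd_card hq)⟩
end

section
/- Let q be a prime power with q ≡ 1 (mod 4), let Δ be a non-square element of F_q, and let x, y ∈ F_q satisfy x^2 - Δ y^2 = 1. Then the image in PSL(2,F_q) of the matrix [[x, Δy],[y, x]] ∈ SL(2,F_q) has odd order, and this order divides (q+1)/2. -/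
/-- Let q ≡ 1 (mod 4), Δ a non-square in F_q, and x, y ∈ F_q with x² - Δy² = 1.
Then the image in PSL(2, F_q) of the matrix [[x, Δy],[y, x]] ∈ SL(2, F_q) has
odd order dividing (q+1)/2. -/
theorem orderOf_image_odd_and_dvd {F : Type*} [Field F] [Fintype F]
    (hq : Fintype.card F % 4 = 1) (Δ : F) (hΔ : ¬ IsSquare Δ) (x y : F)
    (hxy : x ^ 2 - Δ * y ^ 2 = 1) (M : Matrix.SpecialLinearGroup (Fin 2) F)
    (hM : (M : Matrix (Fin 2) (Fin 2) F) = !![x, Δ * y; y, x]) :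
    Odd (orderOf (QuotientGroup.mk M :
        Matrix.SpecialLinearGroup (Fin 2) F ⧸
          Subgroup.center (Matrix.SpecialLinearGroup (Fin 2) F))) ∧
    orderOf (QuotientGroup.mk M :
        Matrix.SpecialLinearGroup (Fin 2) F ⧸
          Subgroup.center (Matrix.SpecialLinearGroup (Fin 2) F)) ∣
      (Fintype.card F + 1) / 2 := by
  set q := Fintype.card F with hqdef
  have hq2 : q % 2 = 1 := by omega
  have hchar2 : ringChar F ≠ 2 := by
    intro h
    have := FiniteField.even_card_iff_char_two.mp h
    omega
  have h2F : (2 : F) ≠ 0 := Ring.two_ne_zero hchar2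
  have hΔ0 : Δ ≠ 0 := fun h => hΔ ⟨0, by simp [h]⟩
  -- Δ ^ (q/2) = -1
  have hΔpow : Δ ^ (q / 2) = -1 := by
    have h1 : Δ ^ (q - 1) = 1 := FiniteField.pow_card_sub_one_eq_one Δ hΔ0
    have hsq : Δ ^ (q / 2) * Δ ^ (q / 2) = 1 := by
      rw [← pow_add, show q / 2 + q / 2 = q - 1 by omega]
      exact h1
    rcases mul_self_eq_one_iff.mp hsq with h | h
    · exact absurd ((FiniteField.isSquare_iff hchar2 hΔ0).mpr h) hΔ
    · exact h
  set J : Matrix (Fin 2) (Fin 2) F := !![0, Δ; 1, 0] with hJ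
  have hJ2 : J * J = Δ • (1 : Matrix (Fin 2) (Fin 2) F) := by
    ext i j
    fin_cases i <;> fin_cases j <;>
      simp [hJ, Matrix.mul_apply, Fin.sum_univ_two, Matrix.one_apply]
  have hMval : (M : Matrix (Fin 2) (Fin 2) F) = x • 1 + y • J := by
    rw [hM]
    ext i j
    fin_cases i <;> fin_cases j <;>
      simp [hJ, Matrix.one_apply, mul_comm]
  -- J ^ q = -J
  have hJq : J ^ q = -J := by
    have hqe : q = 2 * (q / 2) + 1 := by omega
    conv_lhs => rw [hqe]
    rw [pow_succ, pow_mul, pow_two, hJ2, smul_pow, one_pow, hΔpow, smul_mul_assoc,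
      neg_smul, one_smul, one_mul]
  obtain ⟨n, hp, hcard⟩ := FiniteField.card F (ringChar F)
  haveI : Fact (Nat.Prime (ringChar F)) := ⟨hp⟩
  have hcomm : Commute (x • (1 : Matrix (Fin 2) (Fin 2) F)) (y • J) := by
    unfold Commute SemiconjBy
    rw [smul_mul_assoc, mul_smul_comm, smul_mul_assoc, mul_smul_comm, one_mul, mul_one,
      smul_comm]
  -- Frobenius: M ^ q = x • 1 - y • J
  have hxq : x ^ q = x := FiniteField.pow_card x
  have hyq : y ^ q = y := FiniteField.pow_card y
  have hq' : q = ringChar F ^ (n : ℕ) := hcard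
  have hMq : (M : Matrix (Fin 2) (Fin 2) F) ^ q = x • 1 - y • J := by
    rw [hMval, hq', add_pow_char_pow_of_commute (ringChar F) (n : ℕ) hcomm, smul_pow, smul_pow, one_pow,
      ← hq', hxq, hyq, hJq, smul_neg, sub_eq_add_neg]
  have hMq1 : (M : Matrix (Fin 2) (Fin 2) F) ^ (q + 1) = 1 := by
    rw [pow_succ, hMq, hMval]
    have expand : (x • (1 : Matrix (Fin 2) (Fin 2) F) - y • J) * (x • 1 + y • J)
        = (x * x) • (1 : Matrix (Fin 2) (Fin 2) F) - (y * y) • (J * J) := by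
      rw [sub_mul, mul_add, mul_add]
      simp only [smul_mul_assoc, mul_smul_comm, one_mul, mul_one, smul_smul]
      rw [mul_comm y x]
      abel
    rw [expand, hJ2, smul_smul, ← sub_smul,
      show x * x - y * y * Δ = 1 from by linear_combination hxy, one_smul]
  -- in SL(2,F)
  have hMpow : M ^ (q + 1) = 1 := by
    apply Subtype.ext
    rw [Matrix.SpecialLinearGroup.coe_pow, hMq1]
    rfl
  set m := (q + 1) / 2 with hm
  have hmm : m + m = q + 1 := by omega
  set P := M ^ m with hP
  have hP2 : P * P = 1 := by
    rw [hP, ← pow_add, hmm, hMpow]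
  -- P = ±1
  have hPval : (P : Matrix (Fin 2) (Fin 2) F) = 1 ∨
      (P : Matrix (Fin 2) (Fin 2) F) = -1 := by
    set N := (P : Matrix (Fin 2) (Fin 2) F) with hN
    have hN2 : N * N = 1 := by
      rw [hN, ← Matrix.SpecialLinearGroup.coe_mul, hP2]; rfl
    have hdet : N.det = 1 := P.2
    rw [Matrix.det_fin_two] at hdet
    have e00 := congrFun (congrFun hN2 0) 0
    have e01 := congrFun (congrFun hN2 0) 1
    have e10 := congrFun (congrFun hN2 1) 0
    simp only [Matrix.mul_apply, Fin.sum_univ_two, Matrix.one_apply,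
      if_true, if_neg (show ¬((0 : Fin 2) = 1) from by decide),
      if_neg (show ¬((1 : Fin 2) = 0) from by decide), if_pos rfl] at e00 e01 e10
    by_cases had : N 0 0 + N 1 1 = 0
    · exfalso
      apply h2F
      have : N 0 0 * N 0 0 + N 0 1 * N 1 0 = 1 := by simpa using e00
      linear_combination -this - hdet + N 0 0 * had
    · have hb : N 0 1 = 0 := by
        have h01 : N 0 0 * N 0 1 + N 0 1 * N 1 1 = 0 := by simpa using e01
        have : N 0 1 * (N 0 0 + N 1 1) = 0 := by linear_combination h01
        rcases mul_eq_zero.mp this with h | h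
        · exact h
        · exact absurd h had
      have hc : N 1 0 = 0 := by
        have h10 : N 1 0 * N 0 0 + N 1 1 * N 1 0 = 0 := by simpa using e10
        have : N 1 0 * (N 0 0 + N 1 1) = 0 := by linear_combination h10
        rcases mul_eq_zero.mp this with h | h
        · exact h
        · exact absurd h had
      have ha2 : N 0 0 * N 0 0 = 1 := by
        have : N 0 0 * N 0 0 + N 0 1 * N 1 0 = 1 := by simpa using e00
        rw [hb] at this; simpa using this
      have hdd : N 1 1 = N 0 0 := by
        have hdet' : N 0 0 * N 1 1 = 1 := by rw [hb, hc] at hdet; simpa using hdet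
        have ha0 : N 0 0 ≠ 0 := by
          intro h; rw [h, zero_mul] at hdet'; exact one_ne_zero hdet'.symm
        have h' : N 0 0 * N 1 1 = N 0 0 * N 0 0 := hdet'.trans ha2.symm
        exact mul_left_cancel₀ ha0 h'
      rcases mul_self_eq_one_iff.mp ha2 with h | h
      · left
        rw [Matrix.eta_fin_two N, hb, hc, hdd, h]
        exact Matrix.one_fin_two.symm
      · right
        rw [Matrix.eta_fin_two N, hb, hc, hdd, h]
        ext i j
        fin_cases i <;> fin_cases j <;>
          simp [Matrix.neg_apply, Matrix.one_apply]
  -- P maps to 1 in PSL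
  have hPone : (QuotientGroup.mk P :
      Matrix.SpecialLinearGroup (Fin 2) F ⧸
        Subgroup.center (Matrix.SpecialLinearGroup (Fin 2) F)) = 1 := by
    rw [QuotientGroup.eq_one_iff]
    apply Subgroup.mem_center_iff.mpr
    intro g
    apply Subtype.ext
    rw [Matrix.SpecialLinearGroup.coe_mul, Matrix.SpecialLinearGroup.coe_mul]
    rcases hPval with h | h <;> rw [h] <;> simp
  have hpowone : (QuotientGroup.mk M :
      Matrix.SpecialLinearGroup (Fin 2) F ⧸
        Subgroup.center (Matrix.SpecialLinearGroup (Fin 2) F)) ^ m = 1 := by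
    rw [← QuotientGroup.mk_pow, ← hP, hPone]
  have hdvd := orderOf_dvd_of_pow_eq_one hpowone
  have hmodd : Odd m := by rw [Nat.odd_iff]; omega
  refine ⟨?_, hdvd⟩
  rcases Nat.even_or_odd (orderOf (QuotientGroup.mk M :
      Matrix.SpecialLinearGroup (Fin 2) F ⧸
        Subgroup.center (Matrix.SpecialLinearGroup (Fin 2) F))) with he | ho
  · exfalso
    have : (2 : ℕ) ∣ m := dvd_trans he.two_dvd hdvd
    rw [Nat.odd_iff] at hmodd
    omega
  · exact ho
end

section
/- Let q be a power of an odd prime. Then any two elements of order 2 in PSL(2,F_q) are conjugate; that is, the involutions of PSL(2,F_q) form a single conjugacy class. -/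
/-!
An involution of `PSL(2, F)` lifts to some `S ∈ SL(2, F)` whose square is central but which is not
itself central. By Cayley–Hamilton `S² = tr S • S - 1`, so a nonzero trace would make `S` scalar;
hence `tr S = 0` and `S² = -1`. For any vector `v`, the matrix `P` with columns `v` and `S v` then
satisfies `S P = P J`, where `J` is the quarter turn `!![0, -1; 1, 0]`. Since `S` is not scalar,
some `v` makes `P` invertible, and replacing `v` by `(a + b S) v` multiplies `det P` by `a² + b²`.
Every element of a finite field is a sum of two squares, so `P` can be chosen in `SL(2, F)`: every
involution of `PSL(2, F)` is conjugate to the image of `J`.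
-/

open Matrix Polynomial
open scoped MatrixGroups

theorem FiniteField.exists_sq_add_sq {F : Type*} [Field F] [Fintype F] (x : F) :
    ∃ a b : F, a ^ 2 + b ^ 2 = x := by
  rcases Nat.mod_two_eq_zero_or_one (Fintype.card F) with hF | hF
  · obtain ⟨a, rfl⟩ :=
      FiniteField.isSquare_of_char_two (FiniteField.even_card_iff_char_two.mpr hF) x
    exact ⟨a, 0, by ring⟩
  · obtain ⟨a, b, hab⟩ := FiniteField.exists_root_sum_quadratic (f := X ^ 2) (g := X ^ 2 - C x)
      (degree_X_pow 2) (degree_X_pow_sub_C two_pos x) hF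
    refine ⟨a, b, ?_⟩
    simp only [eval_pow, eval_X, eval_sub, eval_C] at hab
    linear_combination hab

namespace Matrix

section CommRing

variable {R : Type*} [CommRing R]

theorem mul_self_fin_two (M : Matrix (Fin 2) (Fin 2) R) :
    M * M = M.trace • M - M.det • 1 := by
  ext i j
  fin_cases i <;> fin_cases j <;>
    simp only [Fin.isValue, Fin.zero_eta, Fin.mk_one, mul_apply, Fin.sum_univ_two, trace_fin_two,
      det_fin_two, sub_apply, smul_apply, smul_eq_mul, one_apply_eq, ne_eq, zero_ne_one,
      one_ne_zero, not_false_eq_true, one_apply_ne, mul_one, mul_zero, sub_zero] <;>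
    ring

theorem det_fin_two_scalar_add_smul (M : Matrix (Fin 2) (Fin 2) R) (a b : R) :
    (scalar (Fin 2) a + b • M).det = a ^ 2 + a * b * M.trace + b ^ 2 * M.det := by
  simp only [scalar_apply, det_fin_two, trace_fin_two, add_apply, diagonal_apply_eq,
    diagonal_apply_ne, smul_apply, smul_eq_mul, ne_eq, zero_ne_one, one_ne_zero,
    not_false_eq_true, zero_add]
  ring

def cyclicMatrix (M : Matrix (Fin 2) (Fin 2) R) (v : Fin 2 → R) : Matrix (Fin 2) (Fin 2) R :=
  of fun i => ![v i, (M *ᵥ v) i]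

theorem mul_cyclicMatrix {M : Matrix (Fin 2) (Fin 2) R} (hM : M * M = -1) (v : Fin 2 → R) :
    M * cyclicMatrix M v = cyclicMatrix M v * !![0, -1; 1, 0] := by
  have hMMv : M *ᵥ (M *ᵥ v) = -v := by rw [mulVec_mulVec, hM, neg_mulVec, one_mulVec]
  ext i j
  fin_cases j
  · simp [cyclicMatrix, mul_apply, mulVec, dotProduct]
  · simpa [cyclicMatrix, mul_apply, mulVec, dotProduct] using congrFun hMMv i

theorem cyclicMatrix_mulVec {M N : Matrix (Fin 2) (Fin 2) R} (h : Commute M N) (v : Fin 2 → R) :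
    cyclicMatrix M (N *ᵥ v) = N * cyclicMatrix M v := by
  have hMNv : M *ᵥ (N *ᵥ v) = N *ᵥ (M *ᵥ v) := by rw [mulVec_mulVec, mulVec_mulVec, h.eq]
  ext i j
  fin_cases j
  · simp [cyclicMatrix, mul_apply, mulVec, dotProduct]
  · simpa [cyclicMatrix, mul_apply, mulVec, dotProduct] using congrFun hMNv i

theorem exists_det_cyclicMatrix_ne_zero {M : Matrix (Fin 2) (Fin 2) R}
    (hM : ∀ r, scalar (Fin 2) r ≠ M) : ∃ v, (cyclicMatrix M v).det ≠ 0 := by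
  by_contra! h
  have h0 := h ![1, 0]
  have h1 := h ![0, 1]
  have h01 := h ![1, 1]
  simp only [cyclicMatrix, det_fin_two, of_apply, mulVec, dotProduct, Fin.sum_univ_two,
    Fin.isValue, cons_val_zero, cons_val_one, cons_val_fin_one, mul_one, mul_zero, one_mul,
    zero_mul, add_zero, zero_add, sub_zero, zero_sub, neg_eq_zero] at h0 h1 h01
  have h11 : M 1 1 = M 0 0 := by linear_combination h01 + h1 - h0
  refine hM (M 0 0) ?_
  ext i j
  fin_cases i <;> fin_cases j <;> simp [h0, h1, h11]

end CommRing

theorem exists_det_cyclicMatrix_eq_one {F : Type*} [Field F] [Fintype F]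
    {M : Matrix (Fin 2) (Fin 2) F} (htr : M.trace = 0) (hdet : M.det = 1)
    (hM : ∀ r, scalar (Fin 2) r ≠ M) : ∃ v, (cyclicMatrix M v).det = 1 := by
  obtain ⟨v, hv⟩ := exists_det_cyclicMatrix_ne_zero hM
  obtain ⟨a, b, hab⟩ := FiniteField.exists_sq_add_sq (cyclicMatrix M v).det⁻¹
  have hcomm : Commute M (scalar (Fin 2) a + b • M) :=
    (scalar_commute a (Commute.all a) M).symm.add_right ((Commute.refl M).smul_right b)
  refine ⟨(scalar (Fin 2) a + b • M) *ᵥ v, ?_⟩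
  rw [cyclicMatrix_mulVec hcomm, det_mul, det_fin_two_scalar_add_smul, htr, hdet]
  simp only [mul_zero, add_zero, mul_one, hab]
  exact inv_mul_cancel₀ hv

namespace SpecialLinearGroup

def quarterTurn {R : Type*} [CommRing R] : SL(2, R) :=
  ⟨!![0, -1; 1, 0], by simp [det_fin_two_of]⟩

variable {F : Type*} [Field F]

theorem isConj_quarterTurn_of_trace_eq_zero [Fintype F] (h2 : (2 : F) ≠ 0) {S : SL(2, F)}
    (hS : trace (S : Matrix (Fin 2) (Fin 2) F) = 0) : IsConj quarterTurn S := by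
  have hSS : (S : Matrix (Fin 2) (Fin 2) F) * S = -1 := by
    rw [mul_self_fin_two, hS, S.2]
    simp
  have hnonscalar : ∀ r, scalar (Fin 2) r ≠ (S : Matrix (Fin 2) (Fin 2) F) := by
    rintro r hr
    have hdet := S.2
    rw [← hr] at hS hdet
    simp only [scalar_apply, trace_diagonal, det_diagonal, Fin.sum_univ_two,
      Fin.prod_univ_two] at hS hdet
    exact h2 (by linear_combination r * hS - 2 * hdet)
  obtain ⟨v, hv⟩ := exists_det_cyclicMatrix_eq_one hS S.2 hnonscalar
  exact ⟨toUnits ⟨cyclicMatrix S v, hv⟩, Subtype.ext (mul_cyclicMatrix hSS v).symm⟩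

theorem trace_eq_zero_of_orderOf_mk_eq_two {S : SL(2, F)}
    (hS : orderOf (S : SL(2, F) ⧸ Subgroup.center SL(2, F)) = 2) :
    trace (S : Matrix (Fin 2) (Fin 2) F) = 0 := by
  have hS_notMem : S ∉ Subgroup.center SL(2, F) := fun h => by
    rw [← QuotientGroup.eq_one_iff] at h
    rw [h, orderOf_one] at hS
    omega
  have hSS : S * S ∈ Subgroup.center SL(2, F) := by
    rw [← QuotientGroup.eq_one_iff, QuotientGroup.mk_mul, ← sq, ← orderOf_dvd_iff_pow_eq_one, hS]
  obtain ⟨r, -, hr⟩ := mem_center_iff.mp hSS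
  by_contra htr
  have hscalar :
      scalar (Fin 2) ((trace (S : Matrix (Fin 2) (Fin 2) F))⁻¹ * (r + 1)) = S := by
    have hCH := mul_self_fin_two (S : Matrix (Fin 2) (Fin 2) F)
    rw [← coe_mul, ← hr, S.2, one_smul, eq_sub_iff_add_eq] at hCH
    rw [map_mul, scalar_apply _⁻¹, ← smul_eq_diagonal_mul, map_add, map_one, hCH, smul_smul,
      inv_mul_cancel₀ htr, one_smul]
  refine hS_notMem (mem_center_iff.mpr ⟨_, ?_, hscalar⟩)
  have hdet := S.2
  rw [← hscalar] at hdet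
  simpa using hdet

end SpecialLinearGroup

end Matrix

/-- In PSL(2, F_q) with q a power of an odd prime, any two elements of order 2
are conjugate. -/
theorem isConj_of_orderOf_eq_two_PSL {F : Type*} [Field F] [Fintype F]
    (hq : Odd (Fintype.card F))
    (g h : Matrix.SpecialLinearGroup (Fin 2) F ⧸
      Subgroup.center (Matrix.SpecialLinearGroup (Fin 2) F))
    (hg : orderOf g = 2) (hh : orderOf h = 2) : IsConj g h := by
  have h2 : (2 : F) ≠ 0 := Ring.two_ne_zero fun hF => by
    rw [FiniteField.even_card_iff_char_two, ← Nat.even_iff] at hF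
    exact Nat.not_even_iff_odd.mpr hq hF
  obtain ⟨S, rfl⟩ := QuotientGroup.mk_surjective g
  obtain ⟨T, rfl⟩ := QuotientGroup.mk_surjective h
  have hS := SpecialLinearGroup.trace_eq_zero_of_orderOf_mk_eq_two hg
  have hT := SpecialLinearGroup.trace_eq_zero_of_orderOf_mk_eq_two hh
  have hST : IsConj S T :=
    (SpecialLinearGroup.isConj_quarterTurn_of_trace_eq_zero h2 hS).symm.trans
      (SpecialLinearGroup.isConj_quarterTurn_of_trace_eq_zero h2 hT)
  exact (QuotientGroup.mk' _).map_isConj hST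
end

section
/- Let q be a power of an odd prime. The centralizer in PGL(2,F_q) of the image of the matrix diag(-1, 1) is isomorphic to the dihedral group of order 2(q-1). -/
open Matrix

namespace CentDihAux

variable {F : Type*} [Field F] [Fintype F]

/-- diagonal unit matrix diag(a,1) as an element of GL(2,F). -/
noncomputable def dU (a : Fˣ) : GL (Fin 2) F :=
  Matrix.GeneralLinearGroup.mkOfDetNeZero !![(a : F), 0; 0, 1]
    (by simp [Matrix.det_fin_two_of])

/-- antidiagonal unit matrix !![0,1;a,0] as an element of GL(2,F). -/
noncomputable def sU (a : Fˣ) : GL (Fin 2) F :=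
  Matrix.GeneralLinearGroup.mkOfDetNeZero !![0, 1; (a : F), 0]
    (by simp [Matrix.det_fin_two_of])

@[simp] lemma dU_val (a : Fˣ) : (dU a : Matrix (Fin 2) (Fin 2) F) = !![(a : F), 0; 0, 1] := rfl
@[simp] lemma sU_val (a : Fˣ) : (sU a : Matrix (Fin 2) (Fin 2) F) = !![0, 1; (a : F), 0] := rfl

/-- elements of the center of GL(2,F) are scalar. -/
lemma center_scalar {z : GL (Fin 2) F} (hz : z ∈ Subgroup.center (GL (Fin 2) F)) :
    ∃ c : Fˣ, (z : Matrix (Fin 2) (Fin 2) F) = (c : F) • 1 := by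
  rw [Subgroup.mem_center_iff] at hz
  have h1 := congrArg Units.val (hz (Matrix.GeneralLinearGroup.mkOfDetNeZero !![1, 1; 0, 1]
    (by simp [Matrix.det_fin_two_of])))
  have h2 := congrArg Units.val (hz (Matrix.GeneralLinearGroup.mkOfDetNeZero !![1, 0; 1, 1]
    (by simp [Matrix.det_fin_two_of])))
  have hT1 : ((Matrix.GeneralLinearGroup.mkOfDetNeZero !![1, 1; 0, 1]
      (by simp [Matrix.det_fin_two_of]) : GL (Fin 2) F) : Matrix (Fin 2) (Fin 2) F)
      = !![1, 1; 0, 1] := rfl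
  have hT2 : ((Matrix.GeneralLinearGroup.mkOfDetNeZero !![1, 0; 1, 1]
      (by simp [Matrix.det_fin_two_of]) : GL (Fin 2) F) : Matrix (Fin 2) (Fin 2) F)
      = !![1, 0; 1, 1] := rfl
  simp only [Units.val_mul, hT1, hT2] at h1 h2
  have e10 : (z : Matrix (Fin 2) (Fin 2) F) 1 0 = 0 := by
    have := congrFun (congrFun h1 0) 0
    simp [Matrix.mul_apply, Fin.sum_univ_two, Matrix.neg_apply, Matrix.vecMul, dotProduct] at this
    linear_combination this
  have e01 : (z : Matrix (Fin 2) (Fin 2) F) 0 1 = 0 := by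
    have := congrFun (congrFun h2 1) 1
    simp [Matrix.mul_apply, Fin.sum_univ_two, Matrix.neg_apply, Matrix.vecMul, dotProduct] at this
    linear_combination this
  have e00 : (z : Matrix (Fin 2) (Fin 2) F) 1 1 = (z : Matrix (Fin 2) (Fin 2) F) 0 0 := by
    have := congrFun (congrFun h1 0) 1
    simp [Matrix.mul_apply, Fin.sum_univ_two, Matrix.neg_apply, Matrix.vecMul, dotProduct] at this
    linear_combination this
  have hdet : ((z : Matrix (Fin 2) (Fin 2) F)).det ≠ 0 :=
    (Matrix.isUnit_iff_isUnit_det _ |>.mp z.isUnit).ne_zero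
  rw [Matrix.det_fin_two, e01, e10] at hdet
  have h00 : (z : Matrix (Fin 2) (Fin 2) F) 0 0 ≠ 0 := by
    intro h; apply hdet; rw [h]; ring
  refine ⟨Units.mk0 _ h00, ?_⟩
  ext i j
  fin_cases i <;> fin_cases j <;>
    simp [Matrix.one_apply, e01, e10, e00]

/-- key lemma: equality in PGL(2,F) means equality of matrices up to a scalar. -/
lemma mk_eq_mk_iff (u v : GL (Fin 2) F) :
    (QuotientGroup.mk u : GL (Fin 2) F ⧸ Subgroup.center (GL (Fin 2) F)) = QuotientGroup.mk v ↔
      ∃ c : Fˣ, (v : Matrix (Fin 2) (Fin 2) F) = (c : F) • (u : Matrix (Fin 2) (Fin 2) F) := by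
  rw [QuotientGroup.eq]
  constructor
  · intro h
    obtain ⟨c, hc⟩ := center_scalar h
    refine ⟨c, ?_⟩
    have hv : v = u * (u⁻¹ * v) := by group
    calc (v : Matrix (Fin 2) (Fin 2) F)
        = (u : Matrix (Fin 2) (Fin 2) F) * ((u⁻¹ * v : GL (Fin 2) F) : Matrix (Fin 2) (Fin 2) F) := by
          rw [← Units.val_mul, ← hv]
      _ = (u : Matrix (Fin 2) (Fin 2) F) * ((c : F) • 1) := by rw [hc]
      _ = (c : F) • (u : Matrix (Fin 2) (Fin 2) F) := by
          rw [mul_smul_comm, mul_one]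
  · rintro ⟨c, hc⟩
    have hval : ((u⁻¹ * v : GL (Fin 2) F) : Matrix (Fin 2) (Fin 2) F) = (c : F) • 1 := by
      rw [Units.val_mul, hc, mul_smul_comm, ← Units.val_mul, inv_mul_cancel, Units.val_one]
    rw [Subgroup.mem_center_iff]
    intro b
    apply Units.ext
    simp only [Units.val_mul, hval]
    rw [mul_smul_comm, smul_mul_assoc, mul_one, one_mul]


section Chi

variable (ζ : Fˣ)

/-- the character `ZMod (orderOf ζ) → Fˣ`. -/
noncomputable def chi (i : ZMod (orderOf ζ)) : Fˣ := ζ ^ i.val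

lemma chi_mul (i j : ZMod (orderOf ζ)) : chi ζ (i + j) = chi ζ i * chi ζ j := by
  haveI : NeZero (orderOf ζ) := ⟨(orderOf_pos ζ).ne'⟩
  rw [chi, chi, chi, ← pow_add]
  exact pow_eq_pow_iff_modEq.mpr (by rw [ZMod.val_add]; exact Nat.mod_modEq _ _)

lemma chi_zero : chi ζ 0 = 1 := by
  haveI : NeZero (orderOf ζ) := ⟨(orderOf_pos ζ).ne'⟩
  rw [chi, ZMod.val_zero, pow_zero]

lemma chi_inj {i j : ZMod (orderOf ζ)} (h : chi ζ i = chi ζ j) : i = j := by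
  haveI : NeZero (orderOf ζ) := ⟨(orderOf_pos ζ).ne'⟩
  rw [chi, chi, pow_eq_pow_iff_modEq] at h
  exact ZMod.val_injective _ ((Nat.ModEq.eq_of_lt_of_lt h (ZMod.val_lt i) (ZMod.val_lt j)))

lemma chi_surj (hζ : ∀ x : Fˣ, x ∈ Subgroup.zpowers ζ) (x : Fˣ) : ∃ i, chi ζ i = x := by
  haveI : NeZero (orderOf ζ) := ⟨(orderOf_pos ζ).ne'⟩
  obtain ⟨m, hm⟩ := (mem_powers_iff_mem_zpowers).mpr (hζ x)
  refine ⟨(m : ZMod (orderOf ζ)), ?_⟩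
  rw [chi, ← hm]
  exact pow_eq_pow_iff_modEq.mpr (by rw [ZMod.val_natCast]; exact Nat.mod_modEq _ _)

lemma chi_sub_eq (i j : ZMod (orderOf ζ)) : chi ζ (j - i) = chi ζ j * (chi ζ i)⁻¹ := by
  have := chi_mul ζ (j - i) i
  rw [sub_add_cancel] at this
  rw [this]
  group

/-- the homomorphism from the dihedral group to PGL(2,F). -/
noncomputable def phiFun : DihedralGroup (orderOf ζ) →
    GL (Fin 2) F ⧸ Subgroup.center (GL (Fin 2) F)
  | .r i => QuotientGroup.mk (dU (chi ζ i))
  | .sr i => QuotientGroup.mk (sU (chi ζ i))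

@[simp] lemma phiFun_r (i : ZMod (orderOf ζ)) :
    phiFun ζ (.r i) = QuotientGroup.mk (dU (chi ζ i)) := rfl
@[simp] lemma phiFun_sr (i : ZMod (orderOf ζ)) :
    phiFun ζ (.sr i) = QuotientGroup.mk (sU (chi ζ i)) := rfl

lemma dU_mul (a b : Fˣ) : dU a * dU b = dU (a * b) := by
  apply Units.ext
  rw [Units.val_mul]
  ext i j
  fin_cases i <;> fin_cases j <;> simp [Matrix.mul_apply, Fin.sum_univ_two]

lemma sU_mul_dU (a b : Fˣ) : sU a * dU b = sU (a * b) := by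
  apply Units.ext
  rw [Units.val_mul]
  ext i j
  fin_cases i <;> fin_cases j <;> simp [Matrix.mul_apply, Fin.sum_univ_two, mul_comm]

lemma phiFun_mul (x y : DihedralGroup (orderOf ζ)) :
    phiFun ζ (x * y) = phiFun ζ x * phiFun ζ y := by
  rcases x with i | i <;> rcases y with j | j
  · rw [DihedralGroup.r_mul_r, phiFun_r, phiFun_r, phiFun_r, chi_mul,
      ← dU_mul, QuotientGroup.mk_mul]
  · rw [DihedralGroup.r_mul_sr, phiFun_sr, phiFun_r, phiFun_sr, ← QuotientGroup.mk_mul]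
    rw [mk_eq_mk_iff]
    refine ⟨chi ζ i, ?_⟩
    rw [Units.val_mul, chi_sub_eq]
    ext k l
    fin_cases k <;> fin_cases l <;>
      · simp [Matrix.mul_apply, Fin.sum_univ_two]
        try field_simp
        try ring
  · rw [DihedralGroup.sr_mul_r, phiFun_sr, phiFun_sr, phiFun_r, chi_mul,
      ← sU_mul_dU, QuotientGroup.mk_mul]
  · rw [DihedralGroup.sr_mul_sr, phiFun_r, phiFun_sr, phiFun_sr, ← QuotientGroup.mk_mul]
    rw [mk_eq_mk_iff]
    refine ⟨chi ζ i, ?_⟩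
    rw [Units.val_mul, chi_sub_eq]
    ext k l
    fin_cases k <;> fin_cases l <;>
      · simp [Matrix.mul_apply, Fin.sum_univ_two]
        try field_simp
        try ring

/-- the monoid hom version. -/
noncomputable def phi : DihedralGroup (orderOf ζ) →*
    (GL (Fin 2) F ⧸ Subgroup.center (GL (Fin 2) F)) where
  toFun := phiFun ζ
  map_one' := by
    rw [DihedralGroup.one_def, phiFun_r, chi_zero]
    have : dU (1 : Fˣ) = 1 := by
      apply Units.ext
      ext i j
      fin_cases i <;> fin_cases j <;> simp [Matrix.one_apply]
    rw [this]
    rfl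
  map_mul' := phiFun_mul ζ

@[simp] lemma phi_r (i : ZMod (orderOf ζ)) :
    phi ζ (.r i) = QuotientGroup.mk (dU (chi ζ i)) := rfl
@[simp] lemma phi_sr (i : ZMod (orderOf ζ)) :
    phi ζ (.sr i) = QuotientGroup.mk (sU (chi ζ i)) := rfl

lemma phi_injective : Function.Injective (phi ζ) := by
  intro x y h
  rcases x with i | i <;> rcases y with j | j <;>
    simp only [phi_r, phi_sr] at h <;> rw [mk_eq_mk_iff] at h <;> obtain ⟨c, hc⟩ := h
  · have h11 := congrFun (congrFun hc 1) 1
    simp at h11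
    have h00 := congrFun (congrFun hc 0) 0
    simp [← h11] at h00
    congr 1
    exact (chi_inj ζ (Units.ext h00)).symm
  · have h00 := congrFun (congrFun hc 0) 0
    simp at h00
  · have h00 := congrFun (congrFun hc 0) 0
    simp at h00
  · have h11 := congrFun (congrFun hc 0) 1
    simp at h11
    have h10 := congrFun (congrFun hc 1) 0
    simp [← h11] at h10
    congr 1
    exact (chi_inj ζ (Units.ext h10)).symm

end Chi

section Main

variable (ζ : Fˣ) (g : GL (Fin 2) F)

lemma range_le_centralizer (hg : (g : Matrix (Fin 2) (Fin 2) F) = !![-1, 0; 0, 1]) :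
    (phi ζ (F := F)).range ≤ Subgroup.centralizer
      {(QuotientGroup.mk g : GL (Fin 2) F ⧸ Subgroup.center (GL (Fin 2) F))} := by
  rintro x ⟨y, rfl⟩
  rw [Subgroup.mem_centralizer_iff]
  rintro z rfl
  rcases y with i | i
  · rw [phi_r, ← QuotientGroup.mk_mul, ← QuotientGroup.mk_mul, mk_eq_mk_iff]
    refine ⟨1, ?_⟩
    simp only [Units.val_mul, hg, Units.val_one, one_smul]
    ext k l
    fin_cases k <;> fin_cases l <;> simp [Matrix.mul_apply, Fin.sum_univ_two]
  · rw [phi_sr, ← QuotientGroup.mk_mul, ← QuotientGroup.mk_mul, mk_eq_mk_iff]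
    refine ⟨-1, ?_⟩
    simp only [Units.val_mul, hg, Units.val_neg, Units.val_one]
    ext k l
    fin_cases k <;> fin_cases l <;> simp [Matrix.mul_apply, Fin.sum_univ_two]

lemma centralizer_le_range (hζ : ∀ x : Fˣ, x ∈ Subgroup.zpowers ζ)
    (h2 : (2 : F) ≠ 0)
    (hg : (g : Matrix (Fin 2) (Fin 2) F) = !![-1, 0; 0, 1]) :
    Subgroup.centralizer
      {(QuotientGroup.mk g : GL (Fin 2) F ⧸ Subgroup.center (GL (Fin 2) F))} ≤
      (phi ζ (F := F)).range := by
  intro x hx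
  obtain ⟨u, rfl⟩ := QuotientGroup.mk_surjective x
  rw [Subgroup.mem_centralizer_iff] at hx
  have hcomm := hx (QuotientGroup.mk g) rfl
  rw [← QuotientGroup.mk_mul, ← QuotientGroup.mk_mul, mk_eq_mk_iff] at hcomm
  obtain ⟨c, hc⟩ := hcomm
  simp only [Units.val_mul, hg] at hc
  -- determinant argument: c^2 = 1
  have hdu : ((u : Matrix (Fin 2) (Fin 2) F)).det ≠ 0 :=
    (Matrix.isUnit_iff_isUnit_det _ |>.mp u.isUnit).ne_zero
  have hdet := congrArg Matrix.det hc
  rw [Matrix.det_mul, Matrix.det_smul, Matrix.det_mul, Fintype.card_fin] at hdet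
  have hdg : (!![-1, 0; 0, 1] : Matrix (Fin 2) (Fin 2) F).det = -1 := by
    simp [Matrix.det_fin_two_of]
  rw [hdg] at hdet
  have hc2 : (c : F) ^ 2 = 1 := by
    have hne : (-1 : F) * (u : Matrix (Fin 2) (Fin 2) F).det ≠ 0 :=
      mul_ne_zero (neg_ne_zero.mpr one_ne_zero) hdu
    apply mul_right_cancel₀ hne
    rw [one_mul]
    first
      | linear_combination hdet
      | linear_combination -hdet
  rcases sq_eq_one_iff.mp hc2 with hc1 | hc1
  · -- c = 1 : u commutes with g, hence diagonal
    rw [hc1, one_smul] at hc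
    have e01 : (u : Matrix (Fin 2) (Fin 2) F) 0 1 = 0 := by
      have := congrFun (congrFun hc 0) 1
      simp [Matrix.mul_apply, Fin.sum_univ_two, Matrix.neg_apply, Matrix.vecMul, dotProduct] at this
      have h2' : (2 : F) * (u : Matrix (Fin 2) (Fin 2) F) 0 1 = 0 := by
        first | linear_combination this | linear_combination -this
      rcases mul_eq_zero.mp h2' with h | h
      · exact absurd h h2
      · exact h
    have e10 : (u : Matrix (Fin 2) (Fin 2) F) 1 0 = 0 := by
      have := congrFun (congrFun hc 1) 0
      simp [Matrix.mul_apply, Fin.sum_univ_two, Matrix.neg_apply, Matrix.vecMul, dotProduct] at this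
      have h2' : (2 : F) * (u : Matrix (Fin 2) (Fin 2) F) 1 0 = 0 := by
        first | linear_combination this | linear_combination -this
      rcases mul_eq_zero.mp h2' with h | h
      · exact absurd h h2
      · exact h
    rw [Matrix.det_fin_two, e01, e10] at hdu
    have ha : (u : Matrix (Fin 2) (Fin 2) F) 0 0 ≠ 0 := fun h => hdu (by rw [h]; ring)
    have hd : (u : Matrix (Fin 2) (Fin 2) F) 1 1 ≠ 0 := fun h => hdu (by rw [h]; ring)
    obtain ⟨i, hi⟩ := chi_surj ζ hζ (Units.mk0 _ ha * (Units.mk0 _ hd)⁻¹)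
    refine ⟨.r i, ?_⟩
    rw [phi_r, mk_eq_mk_iff]
    refine ⟨Units.mk0 _ hd, ?_⟩
    rw [hi]
    ext k l
    fin_cases k <;> fin_cases l <;>
      · simp [e01, e10]
        try field_simp
  · -- c = -1 : u anticommutes with g, hence antidiagonal
    rw [hc1, neg_smul, one_smul] at hc
    have e00 : (u : Matrix (Fin 2) (Fin 2) F) 0 0 = 0 := by
      have := congrFun (congrFun hc 0) 0
      simp [Matrix.mul_apply, Fin.sum_univ_two, Matrix.neg_apply, Matrix.vecMul, dotProduct] at this
      have h2' : (2 : F) * (u : Matrix (Fin 2) (Fin 2) F) 0 0 = 0 := by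
        first | linear_combination this | linear_combination -this
      rcases mul_eq_zero.mp h2' with h | h
      · exact absurd h h2
      · exact h
    have e11 : (u : Matrix (Fin 2) (Fin 2) F) 1 1 = 0 := by
      have := congrFun (congrFun hc 1) 1
      simp [Matrix.mul_apply, Fin.sum_univ_two, Matrix.neg_apply, Matrix.vecMul, dotProduct] at this
      have h2' : (2 : F) * (u : Matrix (Fin 2) (Fin 2) F) 1 1 = 0 := by
        first | linear_combination this | linear_combination -this
      rcases mul_eq_zero.mp h2' with h | h
      · exact absurd h h2
      · exact h
    rw [Matrix.det_fin_two, e00, e11] at hdu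
    have hb : (u : Matrix (Fin 2) (Fin 2) F) 0 1 ≠ 0 := fun h => hdu (by rw [h]; ring)
    have hcc : (u : Matrix (Fin 2) (Fin 2) F) 1 0 ≠ 0 := fun h => hdu (by rw [h]; ring)
    obtain ⟨i, hi⟩ := chi_surj ζ hζ (Units.mk0 _ hcc * (Units.mk0 _ hb)⁻¹)
    refine ⟨.sr i, ?_⟩
    rw [phi_sr, mk_eq_mk_iff]
    refine ⟨Units.mk0 _ hb, ?_⟩
    rw [hi]
    ext k l
    fin_cases k <;> fin_cases l <;>
      · simp [e00, e11]
        try field_simp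

end Main

end CentDihAux

/-- The centralizer in PGL(2, F_q) (q a power of an odd prime) of the image of
the matrix diag(-1, 1) is isomorphic to the dihedral group of order 2(q-1). -/
theorem centralizer_image_diag_neg_one_one_iso_dihedral {F : Type*} [Field F] [Fintype F]
    (hq : Odd (Fintype.card F)) (g : Matrix.GeneralLinearGroup (Fin 2) F)
    (hg : (g : Matrix (Fin 2) (Fin 2) F) = !![-1, 0; 0, 1]) :
    Nonempty
      (Subgroup.centralizer
          {(QuotientGroup.mk g :
            Matrix.GeneralLinearGroup (Fin 2) F ⧸
              Subgroup.center (Matrix.GeneralLinearGroup (Fin 2) F))} ≃*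
        DihedralGroup (Fintype.card F - 1)) := by
  classical
  obtain ⟨ζ, hζ⟩ := IsCyclic.exists_generator (α := Fˣ)
  have hn : orderOf ζ = Fintype.card F - 1 := by
    rw [orderOf_eq_card_of_forall_mem_zpowers hζ, Nat.card_eq_fintype_card, Fintype.card_units]
  have h2 : (2 : F) ≠ 0 := by
    intro h
    have hdvd : ringChar F ∣ 2 := by
      have := (CharP.cast_eq_zero_iff F (ringChar F) 2).mp (by exact_mod_cast h)
      exact this
    have hchar : ringChar F = 2 := by
      rcases (Nat.prime_two.eq_one_or_self_of_dvd (ringChar F) hdvd) with h1 | h1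
      · exact absurd h1 (CharP.ringChar_ne_one)
      · exact h1
    have := FiniteField.even_card_iff_char_two.mp hchar
    rw [Nat.odd_iff.mp hq] at this
    exact one_ne_zero this
  have heq : Subgroup.centralizer
      {(QuotientGroup.mk g :
        Matrix.GeneralLinearGroup (Fin 2) F ⧸
          Subgroup.center (Matrix.GeneralLinearGroup (Fin 2) F))} =
      (CentDihAux.phi ζ).range :=
    le_antisymm (CentDihAux.centralizer_le_range ζ g hζ h2 hg)
      (CentDihAux.range_le_centralizer ζ g hg)
  rw [← hn]
  exact ⟨(MulEquiv.subgroupCongr heq).trans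
    (MonoidHom.ofInjective (CentDihAux.phi_injective ζ)).symm⟩
end

section
/- Let q be a power of an odd prime, let Δ be a non-square element of F_q, and let x, y ∈ F_q with x ≠ 0 and y ≠ 0. The centralizer in PGL(2,F_q) of the image of the matrix [[x, Δy],[y, x]] is cyclic of order q+1. -/
/-!
If the class of `h ∈ GL(2, F)` commutes with that of `g` in `PGL(2, F)`, then `h g h⁻¹ = c g`
for a scalar `c`; comparing traces, with `tr g = 2x ≠ 0` because `q` is odd, gives `c = 1`. As
`y ≠ 0`, the matrices commuting with `g` are exactly the `!![a, Δ * b; b, a]`, a copy of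
`F(√Δ) ≅ 𝔽_{q²}` since `Δ` is not a square. The centralizer is therefore the image of the cyclic
group `𝔽_{q²}ˣ`, whose kernel is the scalars `𝔽_qˣ`, so it is cyclic of order
`(q² - 1) / (q - 1) = q + 1`.
-/

open Matrix Matrix.GeneralLinearGroup

section

variable {F : Type*} [Field F]

/-- `F(√Δ)` embedded in `2 × 2` matrices by its regular representation on the basis `1, √Δ`. -/
def sqrtSubalgebra (Δ : F) : Subalgebra F (Matrix (Fin 2) (Fin 2) F) where
  carrier := {A | A 1 1 = A 0 0 ∧ A 0 1 = Δ * A 1 0}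
  mul_mem' := by
    rintro A B ⟨hA₁, hA₂⟩ ⟨hB₁, hB₂⟩
    constructor <;> simp [mul_apply, Fin.sum_univ_two, hA₁, hA₂, hB₁, hB₂] <;> ring
  add_mem' := by
    rintro A B ⟨hA₁, hA₂⟩ ⟨hB₁, hB₂⟩
    constructor <;> simp [hA₁, hA₂, hB₁, hB₂]; ring
  algebraMap_mem' c := by simp [Algebra.algebraMap_eq_smul_one]

namespace sqrtSubalgebra

variable {Δ : F}

theorem mem_iff {A : Matrix (Fin 2) (Fin 2) F} :
    A ∈ sqrtSubalgebra Δ ↔ A 1 1 = A 0 0 ∧ A 0 1 = Δ * A 1 0 :=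
  Iff.rfl

theorem commute {A B : Matrix (Fin 2) (Fin 2) F} (hA : A ∈ sqrtSubalgebra Δ)
    (hB : B ∈ sqrtSubalgebra Δ) : Commute A B := by
  obtain ⟨hA₁, hA₂⟩ := hA
  obtain ⟨hB₁, hB₂⟩ := hB
  ext i j
  fin_cases i <;> fin_cases j <;>
    simp [mul_apply, Fin.sum_univ_two, hA₁, hA₂, hB₁, hB₂] <;> ring

instance (Δ : F) : CommRing (sqrtSubalgebra Δ) where
  mul_comm a b := Subtype.ext (commute a.2 b.2)

theorem det_eq {A : Matrix (Fin 2) (Fin 2) F} (hA : A ∈ sqrtSubalgebra Δ) :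
    A.det = A 0 0 ^ 2 - Δ * A 1 0 ^ 2 := by
  rw [det_fin_two, hA.1, hA.2]
  ring

theorem eq_zero_of_det_eq_zero (hΔ : ¬IsSquare Δ) {A : Matrix (Fin 2) (Fin 2) F}
    (hA : A ∈ sqrtSubalgebra Δ) (hdet : A.det = 0) : A = 0 := by
  rw [det_eq hA] at hdet
  have hb : A 1 0 = 0 := by
    by_contra hb
    exact hΔ ⟨A 0 0 / A 1 0, by field_simp; linear_combination -hdet⟩
  have ha : A 0 0 = 0 := pow_eq_zero_iff two_ne_zero |>.mp (by simpa [hb] using hdet)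
  ext i j
  fin_cases i <;> fin_cases j <;> simp [hA.1, hA.2, ha, hb]

theorem isDomain (hΔ : ¬IsSquare Δ) : IsDomain (sqrtSubalgebra Δ) := by
  have : NoZeroDivisors (sqrtSubalgebra Δ) := ⟨fun {a b} hab => by
    have hdet : (a : Matrix (Fin 2) (Fin 2) F).det * (b : Matrix (Fin 2) (Fin 2) F).det = 0 := by
      rw [← det_mul, ← Subalgebra.coe_mul, hab, Subalgebra.coe_zero, det_zero]
    refine (mul_eq_zero.mp hdet).imp (fun h => ?_) (fun h => ?_) <;>
      exact Subtype.ext (eq_zero_of_det_eq_zero hΔ (SetLike.coe_mem _) h)⟩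
  exact NoZeroDivisors.to_isDomain _

def equivProd (Δ : F) : sqrtSubalgebra Δ ≃ F × F where
  toFun A := ((A : Matrix (Fin 2) (Fin 2) F) 0 0, (A : Matrix (Fin 2) (Fin 2) F) 1 0)
  invFun p := ⟨!![p.1, Δ * p.2; p.2, p.1], by simp [mem_iff]⟩
  left_inv := by
    rintro ⟨A, hA₁, hA₂⟩
    ext i j
    fin_cases i <;> fin_cases j <;> simp [hA₁, hA₂]
  right_inv p := by simp

theorem card_units [Finite F] (hΔ : ¬IsSquare Δ) :
    Nat.card (sqrtSubalgebra Δ)ˣ = Nat.card F ^ 2 - 1 := by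
  have := isDomain hΔ
  let : Field (sqrtSubalgebra Δ) := (Finite.isDomain_to_isField _).toField
  rw [Nat.card_units, Nat.card_congr (equivProd Δ), Nat.card_prod, sq]

theorem mem_of_commute {x y : F} (hy : y ≠ 0) {A : Matrix (Fin 2) (Fin 2) F}
    (hA : Commute A !![x, Δ * y; y, x]) : A ∈ sqrtSubalgebra Δ := by
  have h₀₀ := congrFun₂ hA.eq 0 0
  have h₁₀ := congrFun₂ hA.eq 1 0
  simp only [mul_apply, Fin.sum_univ_two, of_apply, cons_val', cons_val_zero, cons_val_one,
    cons_val_fin_one] at h₀₀ h₁₀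
  refine ⟨mul_left_cancel₀ hy ?_, mul_left_cancel₀ hy ?_⟩
  · linear_combination h₁₀
  · linear_combination h₀₀

end sqrtSubalgebra

namespace Matrix.GeneralLinearGroup

variable {n : Type*} [Fintype n] [DecidableEq n]

theorem commute_of_commute_mk_center {g h : GL n F} (hg : (g : Matrix n n F).trace ≠ 0)
    (hgh : Commute (g : GL n F ⧸ Subgroup.center (GL n F)) h) : Commute g h := by
  obtain ⟨z, hz, hgz⟩ : ∃ z ∈ Subgroup.center (GL n F), g * h = h * g * z :=
    ⟨_, QuotientGroup.eq.mp hgh.eq.symm, (mul_inv_cancel_left _ _).symm⟩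
  obtain ⟨c, hc⟩ := mem_center_iff_val_mem_range_scalar.mp hz
  have hconj : (g : Matrix n n F) = c • ((h : Matrix n n F) * g * (h⁻¹ : GL n F)) := by
    have := congrArg (fun k : GL n F => ((k * h⁻¹ : GL n F) : Matrix n n F)) hgz
    simp only [mul_inv_cancel_right, Units.val_mul] at this
    rw [← hc, scalar_apply, ← smul_one_eq_diagonal, mul_smul_one] at this
    rwa [smul_mul_assoc] at this
  have hc1 : c = 1 := by
    have := congrArg trace hconj
    rw [trace_smul, trace_units_conj, smul_eq_mul] at this
    exact (mul_eq_right₀ hg).mp this.symm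
  have hz1 : z = 1 := Units.ext (by rw [← hc, hc1, map_one, Units.val_one])
  rw [Commute, SemiconjBy, hgz, hz1, mul_one]

theorem centralizer_singleton_mk_eq_map {g : GL n F} (hg : (g : Matrix n n F).trace ≠ 0) :
    Subgroup.centralizer {(g : GL n F ⧸ Subgroup.center (GL n F))} =
      (Subgroup.centralizer {g}).map (QuotientGroup.mk' _) := by
  ext p
  obtain ⟨h, rfl⟩ := QuotientGroup.mk_surjective p
  simp only [Subgroup.mem_centralizer_singleton_iff, Subgroup.mem_map, QuotientGroup.mk'_apply]
  refine ⟨fun hgh => ⟨h, (commute_of_commute_mk_center hg hgh.symm).symm.eq, rfl⟩, ?_⟩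
  rintro ⟨k, hk, hkh⟩
  rw [← hkh, ← QuotientGroup.mk_mul, hk, QuotientGroup.mk_mul]

def unitsToPGL (K : Subalgebra F (Matrix n n F)) : Kˣ →* GL n F ⧸ Subgroup.center (GL n F) :=
  (QuotientGroup.mk' _).comp (Units.map K.val.toMonoidHom)

theorem ker_unitsToPGL (K : Subalgebra F (Matrix n n F)) :
    (unitsToPGL K).ker = (Units.map (algebraMap F K : F →* K)).range := by
  ext u
  rw [unitsToPGL, MonoidHom.mem_ker, MonoidHom.comp_apply, ← MonoidHom.mem_ker,
    QuotientGroup.ker_mk', center_eq_range_scalar]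
  refine ⟨fun ⟨c, hc⟩ => ⟨c, ?_⟩, fun ⟨c, hc⟩ => ⟨c, ?_⟩⟩
  · ext : 2
    simpa [algebraMap_eq_diagonal, Pi.algebraMap_def] using congrArg Units.val hc
  · ext : 1
    simp [← hc, algebraMap_eq_diagonal, Pi.algebraMap_def]

theorem card_units_eq_mul_card_range_unitsToPGL [Nonempty n] [Finite F]
    (K : Subalgebra F (Matrix n n F)) :
    Nat.card Kˣ = (Nat.card F - 1) * Nat.card (unitsToPGL K).range := by
  have hinj : Function.Injective (Units.map (algebraMap F K : F →* K)) :=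
    Units.map_injective (algebraMap F K).injective
  rw [← (unitsToPGL K).ker.card_mul_index, Subgroup.index_ker, ker_unitsToPGL,
    Nat.card_congr (MonoidHom.ofInjective hinj).toEquiv.symm, Nat.card_units]

end Matrix.GeneralLinearGroup

theorem centralizer_eq_range_units_sqrtSubalgebra {Δ x y : F} (hy : y ≠ 0) {g : GL (Fin 2) F}
    (hg : (g : Matrix (Fin 2) (Fin 2) F) = !![x, Δ * y; y, x]) :
    Subgroup.centralizer {g} = (Units.map (sqrtSubalgebra Δ).val.toMonoidHom).range := by
  ext h
  rw [Subgroup.mem_centralizer_singleton_iff]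
  constructor
  · intro hgh
    have mem (k : GL (Fin 2) F) (hk : k * g = g * k) :
        (k : Matrix (Fin 2) (Fin 2) F) ∈ sqrtSubalgebra Δ :=
      sqrtSubalgebra.mem_of_commute hy <| by
        simpa only [Commute, SemiconjBy, Units.val_mul, hg] using congrArg Units.val hk
    refine ⟨⟨⟨h, mem h hgh⟩, ⟨_, mem h⁻¹ (Commute.inv_left hgh)⟩,
      Subtype.ext h.mul_inv, Subtype.ext h.inv_mul⟩, rfl⟩
  · rintro ⟨u, rfl⟩
    have hgK : (g : Matrix (Fin 2) (Fin 2) F) ∈ sqrtSubalgebra Δ := by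
      simp [hg, sqrtSubalgebra.mem_iff]
    exact Units.ext (sqrtSubalgebra.commute (SetLike.coe_mem _) hgK)

end

/-- Let Δ be a non-square in F_q (q a power of an odd prime) and x, y ∈ F_q with
x ≠ 0 and y ≠ 0. The centralizer in PGL(2, F_q) of the image of the matrix
[[x, Δy],[y, x]] is cyclic of order q + 1. -/
theorem centralizer_image_nonsplit_iso_cyclic {F : Type*} [Field F] [Fintype F]
    (hq : Odd (Fintype.card F)) (Δ : F) (hΔ : ¬ IsSquare Δ) (x y : F)
    (hx : x ≠ 0) (hy : y ≠ 0)
    (g : Matrix.GeneralLinearGroup (Fin 2) F)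
    (hg : (g : Matrix (Fin 2) (Fin 2) F) = !![x, Δ * y; y, x]) :
    IsCyclic
      (Subgroup.centralizer
        {(QuotientGroup.mk g :
          Matrix.GeneralLinearGroup (Fin 2) F ⧸
            Subgroup.center (Matrix.GeneralLinearGroup (Fin 2) F))}) ∧
    Nat.card
        (Subgroup.centralizer
          {(QuotientGroup.mk g :
            Matrix.GeneralLinearGroup (Fin 2) F ⧸
              Subgroup.center (Matrix.GeneralLinearGroup (Fin 2) F))}) =
      Fintype.card F + 1 := by
  have h2 : (2 : F) ≠ 0 := Ring.two_ne_zero <| by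
    rw [Ne, FiniteField.even_card_iff_char_two, Nat.odd_iff.mp hq]
    exact one_ne_zero
  have htr : (g : Matrix (Fin 2) (Fin 2) F).trace ≠ 0 := by
    rw [hg, trace_fin_two]
    simpa [← two_mul] using ⟨h2, hx⟩
  rw [centralizer_singleton_mk_eq_map htr, centralizer_eq_range_units_sqrtSubalgebra hy hg,
    MonoidHom.map_range, ← unitsToPGL]
  have : IsDomain (sqrtSubalgebra Δ) := sqrtSubalgebra.isDomain hΔ
  refine ⟨isCyclic_of_surjective _ (unitsToPGL _).rangeRestrict_surjective, ?_⟩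
  have hcard := card_units_eq_mul_card_range_unitsToPGL (sqrtSubalgebra Δ)
  rw [sqrtSubalgebra.card_units hΔ, Nat.card_eq_fintype_card, ← one_pow 2, Nat.sq_sub_sq,
    mul_comm] at hcard
  exact (Nat.eq_of_mul_eq_mul_left (by have := Fintype.one_lt_card (α := F); omega) hcard).symm
end

section
/- Let q be a power of an odd prime and let x ∈ F_q^× with x^4 ≠ 1. The centralizer in PSL(2,F_q) of the image of the matrix diag(x, x^{-1}) ∈ SL(2,F_q) is cyclic of order (q-1)/2. -/
/-!
If the image of `h ∈ SL(2, F)` in `PSL(2, F)` commutes with that of `t = diag(x, x⁻¹)`,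
then `t h = ± h t`. Comparing entries, the sign `+` forces `h` to be diagonal because
`x² ≠ 1`, and the sign `-` forces `h` to have a zero row because `2 ≠ 0` and `x² ≠ -1`.
So the centralizer is the image of the diagonal torus `Fˣ`, a quotient of the cyclic group
`Fˣ` by the kernel `{±1}`.
-/

open Matrix Subgroup
open scoped MatrixGroups

namespace Matrix.SpecialLinearGroup

variable {R : Type*} [CommRing R]

def diagonalHom : Rˣ →* SL(2, R) where
  toFun a := ⟨!![(a : R), 0; 0, ((a⁻¹ : Rˣ) : R)], by simp [det_fin_two_of]⟩
  map_one' := by ext i j; fin_cases i <;> fin_cases j <;> simp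
  map_mul' a b := Subtype.ext <| by
    change _ = (_ : Matrix (Fin 2) (Fin 2) R) * _
    simp [mul_comm]

@[simp]
lemma coe_diagonalHom (a : Rˣ) :
    (diagonalHom a : Matrix (Fin 2) (Fin 2) R) = !![(a : R), 0; 0, ((a⁻¹ : Rˣ) : R)] :=
  rfl

lemma mem_center_iff_eq_one_or_eq_neg_one [NoZeroDivisors R] {A : SL(2, R)} :
    A ∈ center SL(2, R) ↔ A = 1 ∨ A = -1 := by
  rw [mem_center_iff, Fintype.card_fin]
  constructor
  · rintro ⟨r, hr, hA⟩
    rcases sq_eq_one_iff.mp hr with rfl | rfl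
    · exact Or.inl (Subtype.ext (by simp [← hA]))
    · exact Or.inr (Subtype.ext (by simp only [← hA, map_neg, map_one, coe_neg, coe_one]))
  · rintro (rfl | rfl)
    · exact ⟨1, one_pow 2, by simp⟩
    · exact ⟨-1, by norm_num, by simp only [map_neg, map_one, coe_neg, coe_one]⟩

lemma diagonalHom_eq_one_iff {a : Rˣ} : diagonalHom a = 1 ↔ a = 1 := by
  refine ⟨fun h => ?_, fun h => h ▸ map_one _⟩
  have := congr_arg (fun A : SL(2, R) => (A : Matrix (Fin 2) (Fin 2) R) 0 0) h
  exact Units.ext (by simpa using this)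

lemma diagonalHom_eq_neg_one_iff {a : Rˣ} : diagonalHom a = -1 ↔ a = -1 := by
  constructor
  · intro h
    have := congr_arg (fun A : SL(2, R) => (A : Matrix (Fin 2) (Fin 2) R) 0 0) h
    exact Units.ext (by simpa using this)
  · rintro rfl
    ext i j
    fin_cases i <;> fin_cases j <;> simp

lemma mem_range_diagonalHom_of_commute [IsDomain R] {x : Rˣ} (hx : x ^ 2 ≠ 1) {h : SL(2, R)}
    (hc : Commute (diagonalHom x) h) : h ∈ (diagonalHom (R := R)).range := by
  have e (i j : Fin 2) : ((diagonalHom x * h : SL(2, R)) : Matrix (Fin 2) (Fin 2) R) i j =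
      ((h * diagonalHom x : SL(2, R)) : Matrix (Fin 2) (Fin 2) R) i j := by
    rw [hc.eq]
  have e01 := e 0 1
  have e10 := e 1 0
  simp only [coe_mul, coe_diagonalHom, mul_apply, Fin.sum_univ_two, of_apply, cons_val',
    cons_val_zero, cons_val_one, empty_val', cons_val_fin_one, zero_mul, mul_zero,
    add_zero, zero_add] at e01 e10
  have hxx : (x : R) ≠ ((x⁻¹ : Rˣ) : R) := by
    rw [Ne, Units.val_inj, eq_inv_iff_mul_eq_one, ← sq]; exact hx
  have h01 : (h : Matrix (Fin 2) (Fin 2) R) 0 1 = 0 := by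
    by_contra hne; exact hxx (mul_left_cancel₀ hne (by linear_combination e01))
  have h10 : (h : Matrix (Fin 2) (Fin 2) R) 1 0 = 0 := by
    by_contra hne; exact hxx (mul_left_cancel₀ hne (by linear_combination e10)).symm
  have had : (h : Matrix (Fin 2) (Fin 2) R) 0 0 * h 1 1 = 1 := by
    have hdet := h.det_coe
    rw [det_fin_two, h01] at hdet
    linear_combination hdet
  refine ⟨⟨_, _, had, mul_comm (h 1 1) (h 0 0) ▸ had⟩, Subtype.ext ?_⟩
  ext i j
  fin_cases i <;> fin_cases j <;> simp [h01, h10, Units.inv_mk]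

lemma not_anticommute_diagonalHom [IsDomain R] (h2 : (2 : R) ≠ 0) {x : Rˣ} (hx : x ^ 2 ≠ -1)
    (h : SL(2, R)) :
    diagonalHom x * h ≠ -(h * diagonalHom x) := by
  intro hc
  have e (i j : Fin 2) : ((diagonalHom x * h : SL(2, R)) : Matrix (Fin 2) (Fin 2) R) i j =
      -((h * diagonalHom x : SL(2, R)) : Matrix (Fin 2) (Fin 2) R) i j := by
    rw [hc]; simp
  have e00 := e 0 0
  have e01 := e 0 1
  have e11 := e 1 1
  simp only [coe_mul, coe_diagonalHom, mul_apply, Fin.sum_univ_two, of_apply, cons_val',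
    cons_val_zero, cons_val_one, empty_val', cons_val_fin_one, zero_mul, mul_zero,
    add_zero, zero_add] at e00 e01 e11
  have hx' : (x : R) ^ 2 + 1 ≠ 0 := fun h0 => hx (Units.ext (by push_cast; linear_combination h0))
  have hxinv := x.mul_inv
  have h00 : (h : Matrix (Fin 2) (Fin 2) R) 0 0 = 0 := by
    have : (2 * x : R) * h 0 0 = 0 := by linear_combination e00
    simpa [h2] using this
  have h11 : (h : Matrix (Fin 2) (Fin 2) R) 1 1 = 0 := by
    have : (2 * (x⁻¹ : Rˣ) : R) * h 1 1 = 0 := by linear_combination e11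
    simpa [h2] using this
  have h01 : (h : Matrix (Fin 2) (Fin 2) R) 0 1 = 0 := by
    have : ((x : R) ^ 2 + 1) * h 0 1 = 0 := by linear_combination (x : R) * e01 - h 0 1 * hxinv
    simpa [hx'] using this
  have hdet := h.det_coe
  rw [det_fin_two, h00, h01, h11] at hdet
  simp at hdet

lemma mk_mem_centralizer_mk_iff [NoZeroDivisors R] {g h : SL(2, R)} :
    (h : PSL(2, R)) ∈ centralizer {(g : PSL(2, R))} ↔ g * h = h * g ∨ g * h = -(h * g) := by
  rw [mem_centralizer_singleton_iff, ← QuotientGroup.mk_mul, ← QuotientGroup.mk_mul,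
    QuotientGroup.eq, mem_center_iff_eq_one_or_eq_neg_one, inv_mul_eq_one, inv_mul_eq_iff_eq_mul,
    mul_neg_one, eq_comm (a := h * g)]

def projDiagonalHom : Rˣ →* PSL(2, R) :=
  (QuotientGroup.mk' (center SL(2, R))).comp diagonalHom

lemma mem_ker_projDiagonalHom [NoZeroDivisors R] {a : Rˣ} :
    a ∈ (projDiagonalHom (R := R)).ker ↔ a = 1 ∨ a = -1 := by
  rw [MonoidHom.mem_ker, projDiagonalHom, MonoidHom.comp_apply, QuotientGroup.mk'_apply,
    QuotientGroup.eq_one_iff, mem_center_iff_eq_one_or_eq_neg_one, diagonalHom_eq_one_iff,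
    diagonalHom_eq_neg_one_iff]

lemma centralizer_mk_diagonalHom [IsDomain R] (h2 : (2 : R) ≠ 0) {x : Rˣ} (hx : x ^ 4 ≠ 1) :
    centralizer {(diagonalHom x : PSL(2, R))} = (projDiagonalHom (R := R)).range := by
  have hx1 : x ^ 2 ≠ 1 := fun h => hx (by rw [show 4 = 2 * 2 from rfl, pow_mul, h, one_pow])
  have hx2 : x ^ 2 ≠ -1 := fun h => hx (by rw [show 4 = 2 * 2 from rfl, pow_mul, h]; simp)
  refine le_antisymm ?_ ?_
  · intro k hk
    obtain ⟨h, rfl⟩ := QuotientGroup.mk_surjective k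
    rcases mk_mem_centralizer_mk_iff.mp hk with hc | hc
    · obtain ⟨a, rfl⟩ := mem_range_diagonalHom_of_commute hx1 hc
      exact ⟨a, rfl⟩
    · exact absurd hc (not_anticommute_diagonalHom h2 hx2 h)
  · rintro _ ⟨a, rfl⟩
    exact mem_centralizer_singleton_iff.mpr ((Commute.all a x).map projDiagonalHom).eq

lemma card_range_projDiagonalHom {F : Type*} [Field F] (h2 : (2 : F) ≠ 0) :
    Nat.card (projDiagonalHom (R := F)).range = (Nat.card F - 1) / 2 := by
  have hne : (1 : Fˣ) ≠ -1 := fun h => h2 <| by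
    have := congr_arg Units.val h
    push_cast at this
    linear_combination this
  have hker : ((projDiagonalHom (R := F)).ker : Set Fˣ) = {1, -1} :=
    Set.ext fun _ => mem_ker_projDiagonalHom
  have := card_mul_index (projDiagonalHom (R := F)).ker
  rw [index_ker, ← SetLike.coe_sort_coe, hker, Nat.card_coe_set_eq, Set.ncard_pair hne,
    Nat.card_units] at this
  omega

end Matrix.SpecialLinearGroup

/-- Let x ∈ F_qˣ with x⁴ ≠ 1 (q a power of an odd prime). The centralizer in
PSL(2, F_q) of the image of diag(x, x⁻¹) ∈ SL(2, F_q) is cyclic of order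
(q - 1)/2. -/
theorem centralizer_image_split_torus_cyclic {F : Type*} [Field F] [Fintype F]
    (hq : Odd (Fintype.card F)) (x : Fˣ) (hx : x ^ 4 ≠ 1)
    (g : Matrix.SpecialLinearGroup (Fin 2) F)
    (hg : (g : Matrix (Fin 2) (Fin 2) F) = !![(x : F), 0; 0, ((x⁻¹ : Fˣ) : F)]) :
    IsCyclic
      (Subgroup.centralizer
        {(QuotientGroup.mk g :
          Matrix.SpecialLinearGroup (Fin 2) F ⧸
            Subgroup.center (Matrix.SpecialLinearGroup (Fin 2) F))}) ∧
    Nat.card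
        (Subgroup.centralizer
          {(QuotientGroup.mk g :
            Matrix.SpecialLinearGroup (Fin 2) F ⧸
              Subgroup.center (Matrix.SpecialLinearGroup (Fin 2) F))}) =
      (Fintype.card F - 1) / 2 := by
  have h2 : (2 : F) ≠ 0 := Ring.two_ne_zero fun hchar => by
    have := FiniteField.even_card_of_char_two hchar
    rw [Nat.odd_iff] at hq
    omega
  obtain rfl : g = SpecialLinearGroup.diagonalHom x := Subtype.ext hg
  rw [SpecialLinearGroup.centralizer_mk_diagonalHom h2 hx,
    SpecialLinearGroup.card_range_projDiagonalHom h2, Nat.card_eq_fintype_card]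
  exact ⟨isCyclic_of_surjective _ (MonoidHom.rangeRestrict_surjective _), rfl⟩
end

section
/- In PSL(3,F_4), every element g of order 7 is conjugate to g^n for some integer n with 1 < n < 7; that is, the conjugacy classes of elements of order 7 are quasireal (they contain proper powers of their elements). -/
open Polynomial Matrix

local notation "F" => GaloisField 2 2
local notation "SL3" => Matrix.SpecialLinearGroup (Fin 3) (GaloisField 2 2)

namespace PSL34

-- cube of nonzero element of F4 is 1
lemma cube_eq_one {x : F} (hx : x ≠ 0) : x ^ 3 = 1 := by
  letI : Fintype F := Fintype.ofFinite F
  have hc : Fintype.card F = 4 := by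
    rw [← Nat.card_eq_fintype_card, GaloisField.card 2 2 (by norm_num)]; norm_num
  have h := FiniteField.pow_card_sub_one_eq_one x hx
  rw [hc] at h
  simpa using h

lemma two_eq_zero_F : (2 : F) = 0 := by
  have := CharP.cast_eq_zero F 2
  exact_mod_cast this

lemma two_eq_zero_poly : (2 : F[X]) = 0 := by
  have : ((2 : ℕ) : F[X]) = C ((2 : ℕ) : F) := (Polynomial.C_eq_natCast 2).symm
  simpa [two_eq_zero_F] using this

lemma fact7 : (X ^ 7 - 1 : F[X]) =
    (X + 1) * ((X ^ 3 + X + 1) * (X ^ 3 + X ^ 2 + 1)) := by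
  linear_combination (-(X^6 : F[X]) - X^5 - 2*X^4 - 2*X^3 - X^2 - X - 1) * two_eq_zero_poly

lemma f1_monic : (X ^ 3 + X + 1 : F[X]).Monic := by
  have : (X ^ 3 + X + 1 : F[X]) = X ^ 3 + (X + 1) := by ring
  rw [this]
  exact monic_X_pow_add (lt_of_le_of_lt (by compute_degree) (by norm_num))

lemma f2_monic : (X ^ 3 + X ^ 2 + 1 : F[X]).Monic := by
  have : (X ^ 3 + X ^ 2 + 1 : F[X]) = X ^ 3 + (X ^ 2 + 1) := by ring
  rw [this]
  exact monic_X_pow_add (lt_of_le_of_lt (by compute_degree) (by norm_num))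

lemma f1_natDegree : (X ^ 3 + X + 1 : F[X]).natDegree = 3 := by compute_degree!

lemma f2_natDegree : (X ^ 3 + X ^ 2 + 1 : F[X]).natDegree = 3 := by compute_degree!

lemma f1_irred : Irreducible (X ^ 3 + X + 1 : F[X]) := by
  rw [Polynomial.irreducible_iff_roots_eq_zero_of_degree_le_three (by rw [f1_natDegree]; norm_num)
    (by rw [f1_natDegree])]
  rw [Multiset.eq_zero_iff_forall_notMem]
  intro a ha
  rw [mem_roots f1_monic.ne_zero] at ha
  have h : eval a (X ^ 3 + X + 1 : F[X]) = 0 := ha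
  simp only [IsRoot, eval_add, eval_pow, eval_X, eval_one] at h
  by_cases h0 : a = 0
  · simp [h0] at h
  · rw [cube_eq_one h0] at h
    have : a = 0 := by linear_combination h - two_eq_zero_F
    exact h0 this

lemma f2_irred : Irreducible (X ^ 3 + X ^ 2 + 1 : F[X]) := by
  rw [Polynomial.irreducible_iff_roots_eq_zero_of_degree_le_three (by rw [f2_natDegree]; norm_num)
    (by rw [f2_natDegree])]
  rw [Multiset.eq_zero_iff_forall_notMem]
  intro a ha
  rw [mem_roots f2_monic.ne_zero] at ha
  have h : eval a (X ^ 3 + X ^ 2 + 1 : F[X]) = 0 := ha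
  simp only [IsRoot, eval_add, eval_pow, eval_X, eval_one] at h
  by_cases h0 : a = 0
  · simp [h0] at h
  · rw [cube_eq_one h0] at h
    -- 1 + a^2 + 1 = 0  →  a^2 = 0 → a = 0
    have ha2 : a ^ 2 = 0 := by linear_combination h - two_eq_zero_F
    exact h0 (pow_eq_zero_iff (by norm_num) |>.mp ha2)

variable {K : Type*} [Field K]

lemma monic_eq_of_dvd {p q : K[X]} (hp : p.Monic) (hq : q.Monic)
    (h : p ∣ q) (hd : q.natDegree ≤ p.natDegree) : p = q := by
  obtain ⟨u, rfl⟩ := h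
  have hp0 : p ≠ 0 := hp.ne_zero
  have hu0 : u ≠ 0 := by rintro rfl; rw [mul_zero] at hq; exact hq.ne_zero rfl
  have hdeg : (p * u).natDegree = p.natDegree + u.natDegree := natDegree_mul hp0 hu0
  have hu : u.natDegree = 0 := by omega
  have : u = C (u.coeff 0) := eq_C_of_natDegree_eq_zero hu
  rw [this] at hq ⊢
  have : u.coeff 0 = 1 := by
    have := hq.leadingCoeff
    rw [leadingCoeff_mul, hp.leadingCoeff, one_mul, leadingCoeff_C] at this
    exact this
  rw [this, _root_.map_one, mul_one]

lemma aeval_isUnit {A : Matrix (Fin 3) (Fin 3) K} {q p : K[X]}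
    (hq : Irreducible q) (hd : q.natDegree = 3) (h0 : aeval A q = 0)
    (hp : p ≠ 0) (hdp : p.natDegree ≤ 2) : IsUnit (aeval A p) := by
  have hnd : ¬ q ∣ p := fun h => by
    have := Polynomial.natDegree_le_of_dvd h hp; omega
  obtain ⟨s, t, hst⟩ := (hq.coprime_iff_not_dvd).2 hnd
  have h1 : aeval A (t * p) = 1 := by
    have := congrArg (aeval A) hst
    simpa [map_add, _root_.map_mul, h0] using this
  refine ⟨⟨aeval A p, aeval A t, ?_, ?_⟩, rfl⟩
  · rw [← _root_.map_mul, mul_comm p t, h1]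
  · rw [← _root_.map_mul, h1]

lemma smul_comb_eq_aeval (A : Matrix (Fin 3) (Fin 3) K) (x : Fin 3 → K) :
    x 0 • (1 : Matrix (Fin 3) (Fin 3) K) + x 1 • A + x 2 • A ^ 2
      = aeval A (C (x 0) + C (x 1) * X + C (x 2) * X ^ 2) := by
  simp [map_add, _root_.map_mul, aeval_C, aeval_X, map_pow, Algebra.algebraMap_eq_smul_one,
    smul_mul_assoc, one_mul]

lemma comb_isUnit {A : Matrix (Fin 3) (Fin 3) K} {q : K[X]}
    (hq : Irreducible q) (hd : q.natDegree = 3) (h0 : aeval A q = 0)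
    (x : Fin 3 → K) (hx : x ≠ 0) :
    IsUnit (x 0 • (1 : Matrix (Fin 3) (Fin 3) K) + x 1 • A + x 2 • A ^ 2) := by
  rw [smul_comb_eq_aeval]
  refine aeval_isUnit hq hd h0 ?_ ?_
  · intro hp0
    apply hx
    funext i
    have h0' : (C (x 0) + C (x 1) * X + C (x 2) * X ^ 2 : K[X]).coeff 0 = x 0 := by
      simp [coeff_add, coeff_C, coeff_C_mul, coeff_X, coeff_X_pow]
    have h1' : (C (x 0) + C (x 1) * X + C (x 2) * X ^ 2 : K[X]).coeff 1 = x 1 := by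
      simp [coeff_add, coeff_C, coeff_C_mul, coeff_X, coeff_X_pow]
    have h2' : (C (x 0) + C (x 1) * X + C (x 2) * X ^ 2 : K[X]).coeff 2 = x 2 := by
      simp [coeff_add, coeff_C, coeff_C_mul, coeff_X, coeff_X_pow]
    rw [hp0] at h0' h1' h2'
    simp only [coeff_zero] at h0' h1' h2'
    fin_cases i <;> simp [← h0', ← h1', ← h2']
  · compute_degree

lemma eval_charpoly' (M : Matrix (Fin 3) (Fin 3) K) (α : K) :
    (M.charpoly).eval α = (α • (1 : Matrix (Fin 3) (Fin 3) K) - M).det := by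
  rw [Matrix.charpoly, ← Polynomial.coe_evalRingHom, RingHom.map_det]
  congr 1
  ext i j
  by_cases h : i = j
  · subst h
    simp [Matrix.charmatrix_apply_eq, Matrix.one_apply, Matrix.smul_apply, Matrix.sub_apply]
  · simp [Matrix.charmatrix_apply_ne _ _ _ h, Matrix.one_apply_ne h, Matrix.smul_apply,
      Matrix.sub_apply]

/-- If `A` satisfies the cubic relation and all nonzero quadratic combinations in `A`
are invertible, then `A` is similar to the companion matrix. -/
lemma cyclic_to_companion (A : Matrix (Fin 3) (Fin 3) K) (β γ δ : K)
    (hA : A ^ 3 = β • A ^ 2 + γ • A + δ • 1)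
    (hAu : ∀ x : Fin 3 → K, x ≠ 0 → IsUnit (x 0 • (1 : Matrix (Fin 3) (Fin 3) K)
      + x 1 • A + x 2 • A ^ 2)) :
    ∃ T : Matrix (Fin 3) (Fin 3) K, IsUnit T.det ∧
      A * T = T * !![0, 0, δ; 1, 0, γ; 0, 1, β] := by
  classical
  set v : Fin 3 → K := Pi.single 0 1 with hv
  have hv0 : v ≠ 0 := by
    intro h
    have := congrFun h 0
    simp [hv] at this
  set T : Matrix (Fin 3) (Fin 3) K :=
    Matrix.of (fun i j => ![v, A *ᵥ v, A ^ 2 *ᵥ v] j i) with hT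
  have hTapp : ∀ i, (T i 0 = v i) ∧ (T i 1 = (A *ᵥ v) i) ∧ (T i 2 = (A ^ 2 *ᵥ v) i) := by
    intro i
    refine ⟨rfl, rfl, rfl⟩
  have hTmul : ∀ x : Fin 3 → K,
      T *ᵥ x = (x 0 • (1 : Matrix (Fin 3) (Fin 3) K) + x 1 • A + x 2 • A ^ 2) *ᵥ v := by
    intro x
    funext i
    rw [Matrix.add_mulVec, Matrix.add_mulVec, Matrix.smul_mulVec,
      Matrix.smul_mulVec, Matrix.smul_mulVec, Matrix.one_mulVec]
    simp only [Matrix.mulVec, dotProduct, Fin.sum_univ_three]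
    rw [(hTapp i).1, (hTapp i).2.1, (hTapp i).2.2]
    simp only [Pi.add_apply, Pi.smul_apply, smul_eq_mul]
    ring
  have hinj : Function.Injective T.mulVec := by
    have hker : ∀ x, T *ᵥ x = 0 → x = 0 := by
      intro x hx0
      by_contra hx
      have hZ := hAu x hx
      set Z := x 0 • (1 : Matrix (Fin 3) (Fin 3) K) + x 1 • A + x 2 • A ^ 2 with hZdef
      have hZv : Z *ᵥ v = 0 := by rw [← hTmul]; exact hx0
      have hZdet : IsUnit Z.det := (Matrix.isUnit_iff_isUnit_det Z).mp hZ
      have : Z⁻¹ *ᵥ (Z *ᵥ v) = v := by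
        rw [Matrix.mulVec_mulVec, Matrix.nonsing_inv_mul Z hZdet, Matrix.one_mulVec]
      rw [hZv, Matrix.mulVec_zero] at this
      exact hv0 this.symm
    intro x y hxy
    have h1 : T *ᵥ (x - y) = 0 := by rw [Matrix.mulVec_sub, hxy, sub_self]
    exact sub_eq_zero.mp (hker _ h1)
  have hTdet : IsUnit T.det := (Matrix.isUnit_iff_isUnit_det T).mp
    (Matrix.mulVec_injective_iff_isUnit.mp hinj)
  refine ⟨T, hTdet, ?_⟩
  ext i j
  have hL : ∀ j : Fin 3, (A * T) i j = (A *ᵥ (![v, A *ᵥ v, A ^ 2 *ᵥ v] j)) i := by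
    intro j; rfl
  have hR : ∀ j : Fin 3, (T * !![0, 0, δ; 1, 0, γ; 0, 1, β]) i j
      = T i 0 * !![0, 0, δ; 1, 0, γ; 0, 1, β] 0 j
        + T i 1 * !![0, 0, δ; 1, 0, γ; 0, 1, β] 1 j
        + T i 2 * !![0, 0, δ; 1, 0, γ; 0, 1, β] 2 j := by
    intro j
    rw [Matrix.mul_apply, Fin.sum_univ_three]
  fin_cases j
  · rw [hL, hR]
    simp only [Matrix.cons_val_zero, Matrix.cons_val_one, Matrix.head_cons,
      Matrix.cons_val', Matrix.empty_val', Matrix.cons_val_fin_one]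
    rw [(hTapp i).2.1]
    show (A *ᵥ v) i = _
    simp [(hTapp i).1, (hTapp i).2.2]
  · rw [hL, hR]
    rw [(hTapp i).2.2]
    show (A *ᵥ (A *ᵥ v)) i = _
    rw [Matrix.mulVec_mulVec, ← pow_two]
    simp [(hTapp i).1, (hTapp i).2.1]
  · rw [hL, hR]
    show (A *ᵥ (A ^ 2 *ᵥ v)) i = _
    rw [Matrix.mulVec_mulVec, ← pow_succ', hA]
    rw [Matrix.add_mulVec, Matrix.add_mulVec, Matrix.smul_mulVec,
      Matrix.smul_mulVec, Matrix.smul_mulVec, Matrix.one_mulVec]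
    rw [(hTapp i).1, (hTapp i).2.1, (hTapp i).2.2]
    simp only [Pi.add_apply, Pi.smul_apply, smul_eq_mul]
    simp
    ring

lemma conj_of_relation (A B : Matrix (Fin 3) (Fin 3) K) (β γ δ : K)
    (hA : A ^ 3 = β • A ^ 2 + γ • A + δ • 1)
    (hB : B ^ 3 = β • B ^ 2 + γ • B + δ • 1)
    (hAu : ∀ x : Fin 3 → K, x ≠ 0 → IsUnit (x 0 • (1 : Matrix (Fin 3) (Fin 3) K)
      + x 1 • A + x 2 • A ^ 2))
    (hBu : ∀ x : Fin 3 → K, x ≠ 0 → IsUnit (x 0 • (1 : Matrix (Fin 3) (Fin 3) K)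
      + x 1 • B + x 2 • B ^ 2)) :
    ∃ P : Matrix (Fin 3) (Fin 3) K, IsUnit P.det ∧ P * A = B * P := by
  obtain ⟨T, hTdet, hTeq⟩ := cyclic_to_companion A β γ δ hA hAu
  obtain ⟨S, hSdet, hSeq⟩ := cyclic_to_companion B β γ δ hB hBu
  refine ⟨S * T⁻¹, ?_, ?_⟩
  · rw [Matrix.det_mul]
    exact hSdet.mul (T.isUnit_nonsing_inv_det hTdet)
  · have hT1 : T * T⁻¹ = 1 := Matrix.mul_nonsing_inv T hTdet
    have hT2 : T⁻¹ * T = 1 := Matrix.nonsing_inv_mul T hTdet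
    have hid : A = A * T * T⁻¹ := by rw [mul_assoc, hT1, mul_one]
    calc S * T⁻¹ * A = S * T⁻¹ * (A * T * T⁻¹) := by rw [← hid]
      _ = S * (T⁻¹ * T) * !![0, 0, δ; 1, 0, γ; 0, 1, β] * T⁻¹ := by
          rw [hTeq]; noncomm_ring
      _ = S * !![0, 0, δ; 1, 0, γ; 0, 1, β] * T⁻¹ := by rw [hT2, mul_one]
      _ = B * (S * T⁻¹) := by rw [← hSeq]; noncomm_ring

lemma finish_step (M : Matrix (Fin 3) (Fin 3) F) {q : F[X]} (hqm : q.Monic)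
    (hd : q.natDegree = 3) (hcp : q ∣ M.charpoly) (P : Matrix (Fin 3) (Fin 3) F)
    (hPM : P * M = M ^ 2 * P) (α : F) (hα : P.det * eval α q = 1) :
    ∃ u : Matrix (Fin 3) (Fin 3) F, u.det = 1 ∧ u * M = M ^ 2 * u := by
  have hcq : M.charpoly = q :=
    (monic_eq_of_dvd hqm M.charpoly_monic hcp (by simp [hd])).symm
  set z := M + α • (1 : Matrix (Fin 3) (Fin 3) F) with hzdef
  have hzdet : z.det = eval α q := by
    have h1 : z = α • (1 : Matrix (Fin 3) (Fin 3) F) - M := by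
      rw [CharTwo.sub_eq_add, add_comm]
    rw [h1, ← eval_charpoly', hcq]
  have hzM : z * M = M * z := by
    rw [hzdef, add_mul, mul_add, smul_mul_assoc, mul_smul_comm, one_mul, mul_one]
  refine ⟨P * z, ?_, ?_⟩
  · rw [Matrix.det_mul, hzdet, hα]
  · calc P * z * M = P * (z * M) := by rw [mul_assoc]
      _ = P * M * z := by rw [hzM, mul_assoc]
      _ = M ^ 2 * (P * z) := by rw [hPM, mul_assoc]

lemma conj_step (M : Matrix (Fin 3) (Fin 3) F) (h7 : M ^ 7 = 1)
    (hns : ∀ r : F, M ≠ r • 1) :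
    ∃ u : Matrix (Fin 3) (Fin 3) F, u.det = 1 ∧ u * M = M ^ 2 * u := by
  have hint : IsIntegral F M := Matrix.isIntegral M
  have hmon := minpoly.monic hint
  have hd7 : minpoly F M ∣ X ^ 7 - 1 := minpoly.dvd F M (by
    simp [map_sub, map_pow, aeval_X, h7])
  have hdc : minpoly F M ∣ M.charpoly := minpoly.dvd F M M.aeval_self_charpoly
  have hc3 : M.charpoly.natDegree = 3 := by
    simp [Matrix.charpoly_natDegree_eq_dim]
  have hdeg3 : (minpoly F M).natDegree ≤ 3 := by
    have := Polynomial.natDegree_le_of_dvd hdc M.charpoly_monic.ne_zero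
    rwa [hc3] at this
  have hq : minpoly F M = X ^ 3 + X + 1 ∨ minpoly F M = X ^ 3 + X ^ 2 + 1 := by
    by_cases h1 : (X ^ 3 + X + 1 : F[X]) ∣ minpoly F M
    · exact Or.inl (monic_eq_of_dvd f1_monic hmon h1 (by rw [f1_natDegree]; exact hdeg3)).symm
    · by_cases h2 : (X ^ 3 + X ^ 2 + 1 : F[X]) ∣ minpoly F M
      · exact Or.inr (monic_eq_of_dvd f2_monic hmon h2
          (by rw [f2_natDegree]; exact hdeg3)).symm
      · exfalso
        have hcop1 : IsCoprime (minpoly F M) (X ^ 3 + X + 1 : F[X]) :=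
          ((f1_irred.coprime_iff_not_dvd).2 h1).symm
        have hcop2 : IsCoprime (minpoly F M) (X ^ 3 + X ^ 2 + 1 : F[X]) :=
          ((f2_irred.coprime_iff_not_dvd).2 h2).symm
        have hdvd : minpoly F M ∣ ((X + 1) * (X ^ 3 + X + 1)) * (X ^ 3 + X ^ 2 + 1) := by
          rw [mul_assoc, ← fact7]; exact hd7
        have h3 : minpoly F M ∣ (X + 1) * (X ^ 3 + X + 1) :=
          hcop2.dvd_of_dvd_mul_right hdvd
        have h4 : minpoly F M ∣ (X + 1 : F[X]) := hcop1.dvd_of_dvd_mul_right h3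
        have hdle : (minpoly F M).natDegree ≤ 1 := by
          have hX1 : (X + 1 : F[X]) = X + C 1 := by rw [_root_.map_one]
          have hne : (X + 1 : F[X]) ≠ 0 := by
            rw [hX1]; exact Polynomial.X_add_C_ne_zero 1
          have := Polynomial.natDegree_le_of_dvd h4 hne
          rwa [hX1, Polynomial.natDegree_X_add_C] at this
        have hpos : 0 < (minpoly F M).natDegree := minpoly.natDegree_pos hint
        have h1deg : (minpoly F M).natDegree = 1 := le_antisymm hdle hpos
        have hform : minpoly F M = X + C ((minpoly F M).coeff 0) := by
          have := Polynomial.eq_X_add_C_of_natDegree_le_one hdle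
          have hlc : (minpoly F M).coeff 1 = 1 := by
            have := hmon
            rw [Polynomial.Monic, Polynomial.leadingCoeff, h1deg] at this
            exact this
          rw [hlc] at this
          simpa using this
        have haev := minpoly.aeval F M
        rw [hform] at haev
        simp only [map_add, aeval_X, aeval_C, Algebra.algebraMap_eq_smul_one] at haev
        have : M = ((minpoly F M).coeff 0) • (1 : Matrix (Fin 3) (Fin 3) F) := by
          rw [← CharTwo.neg_eq (((minpoly F M).coeff 0) • (1 : Matrix (Fin 3) (Fin 3) F))]
          exact eq_neg_of_add_eq_zero_left haev
        exact hns _ this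
  rcases hq with hq | hq
  · -- minpoly = X^3 + X + 1
    have hq0 : aeval M (X ^ 3 + X + 1 : F[X]) = 0 := by
      rw [← hq]; exact minpoly.aeval F M
    have hrel : M ^ 3 = M + 1 := by
      rw [← CharTwo.sub_eq_add, eq_sub_iff_add_eq, ← sub_eq_zero, CharTwo.sub_eq_add]
      have : aeval M (X ^ 3 + X + 1 : F[X]) = M ^ 3 + M + 1 := by
        simp [map_add, map_pow, aeval_X]
      rw [this] at hq0
      rw [← hq0]; abel
    have hsq : ∀ A B : Matrix (Fin 3) (Fin 3) F, (A + B) ^ 2 = A ^ 2 + A * B + B * A + B ^ 2 := by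
      intro A B; noncomm_ring
    have hM6 : (M ^ 2) ^ 3 = M ^ 2 + 1 := by
      have h1 : (M ^ 2) ^ 3 = (M ^ 3) ^ 2 := by
        rw [← pow_mul, ← pow_mul]
      rw [h1, hrel, hsq]
      simp only [mul_one, one_mul, one_pow]
      rw [show M ^ 2 + M + M + 1 = M ^ 2 + (M + M) + 1 by abel,
        CharTwo.add_self_eq_zero M, add_zero]
    have hrelN : aeval (M ^ 2) (X ^ 3 + X + 1 : F[X]) = 0 := by
      have : aeval (M ^ 2) (X ^ 3 + X + 1 : F[X]) = (M ^ 2) ^ 3 + M ^ 2 + 1 := by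
        simp [map_add, map_pow, aeval_X]
      rw [this, hM6]
      rw [show M ^ 2 + 1 + M ^ 2 + 1 = (M ^ 2 + M ^ 2) + (1 + 1) by abel,
        CharTwo.add_self_eq_zero, CharTwo.add_self_eq_zero, add_zero]
    have hA : M ^ 3 = (0 : F) • M ^ 2 + (1 : F) • M + (1 : F) • 1 := by
      rw [hrel]; simp
    have hB : (M ^ 2) ^ 3 = (0 : F) • (M ^ 2) ^ 2 + (1 : F) • (M ^ 2) + (1 : F) • 1 := by
      rw [hM6]; simp
    obtain ⟨P, hPdet, hPM⟩ := conj_of_relation M (M ^ 2) 0 1 1 hA hB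
      (fun x hx => comb_isUnit f1_irred f1_natDegree hq0 x hx)
      (fun x hx => comb_isUnit f1_irred f1_natDegree hrelN x hx)
    have hd0 : P.det ≠ 0 := hPdet.ne_zero
    refine finish_step M f1_monic f1_natDegree (hq ▸ hdc) P hPM P.det⁻¹ ?_
    have hev : eval P.det⁻¹ (X ^ 3 + X + 1 : F[X]) = P.det⁻¹ := by
      simp only [eval_add, eval_pow, eval_X, eval_one]
      rw [cube_eq_one (inv_ne_zero hd0)]
      linear_combination two_eq_zero_F
    rw [hev, mul_inv_cancel₀ hd0]
  · -- minpoly = X^3 + X^2 + 1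
    have hq0 : aeval M (X ^ 3 + X ^ 2 + 1 : F[X]) = 0 := by
      rw [← hq]; exact minpoly.aeval F M
    have hrel : M ^ 3 = M ^ 2 + 1 := by
      rw [← CharTwo.sub_eq_add, eq_sub_iff_add_eq, ← sub_eq_zero, CharTwo.sub_eq_add]
      have : aeval M (X ^ 3 + X ^ 2 + 1 : F[X]) = M ^ 3 + M ^ 2 + 1 := by
        simp [map_add, map_pow, aeval_X]
      rw [this] at hq0
      rw [← hq0]; abel
    have hsq : ∀ A B : Matrix (Fin 3) (Fin 3) F, (A + B) ^ 2 = A ^ 2 + A * B + B * A + B ^ 2 := by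
      intro A B; noncomm_ring
    have hM6 : (M ^ 2) ^ 3 = (M ^ 2) ^ 2 + 1 := by
      have h1 : (M ^ 2) ^ 3 = (M ^ 3) ^ 2 := by
        rw [← pow_mul, ← pow_mul]
      have h2 : ((M ^ 2) ^ 2 : Matrix (Fin 3) (Fin 3) F) = (M ^ 2) * (M ^ 2) := by
        rw [pow_two]
      rw [h1, hrel, hsq]
      simp only [mul_one, one_mul, one_pow]
      rw [show (M ^ 2) ^ 2 + M ^ 2 + M ^ 2 + 1 = (M ^ 2) ^ 2 + (M ^ 2 + M ^ 2) + 1 by abel,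
        CharTwo.add_self_eq_zero (M ^ 2), add_zero]
    have hrelN : aeval (M ^ 2) (X ^ 3 + X ^ 2 + 1 : F[X]) = 0 := by
      have : aeval (M ^ 2) (X ^ 3 + X ^ 2 + 1 : F[X]) = (M ^ 2) ^ 3 + (M ^ 2) ^ 2 + 1 := by
        simp [map_add, map_pow, aeval_X]
      rw [this, hM6]
      rw [show (M ^ 2) ^ 2 + 1 + (M ^ 2) ^ 2 + 1 = ((M ^ 2) ^ 2 + (M ^ 2) ^ 2) + (1 + 1) by abel,
        CharTwo.add_self_eq_zero, CharTwo.add_self_eq_zero, add_zero]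
    have hA : M ^ 3 = (1 : F) • M ^ 2 + (0 : F) • M + (1 : F) • 1 := by
      rw [hrel]; simp
    have hB : (M ^ 2) ^ 3 = (1 : F) • (M ^ 2) ^ 2 + (0 : F) • (M ^ 2) + (1 : F) • 1 := by
      rw [hM6]; simp
    obtain ⟨P, hPdet, hPM⟩ := conj_of_relation M (M ^ 2) 1 0 1 hA hB
      (fun x hx => comb_isUnit f2_irred f2_natDegree hq0 x hx)
      (fun x hx => comb_isUnit f2_irred f2_natDegree hrelN x hx)
    have hd0 : P.det ≠ 0 := hPdet.ne_zero
    refine finish_step M f2_monic f2_natDegree (hq ▸ hdc) P hPM P.det ?_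
    have hev : eval P.det (X ^ 3 + X ^ 2 + 1 : F[X]) = P.det ^ 2 := by
      simp only [eval_add, eval_pow, eval_X, eval_one]
      rw [cube_eq_one hd0]
      linear_combination two_eq_zero_F
    rw [hev, ← pow_succ']
    exact cube_eq_one hd0

end PSL34

/-- In PSL(3, F₄) (the Mathieu group M₂₁), every element of order 7 is conjugate
to a proper power of itself: the classes of elements of order 7 are quasireal. -/
theorem psl3_f4_order_seven_quasireal
    (g : Matrix.SpecialLinearGroup (Fin 3) (GaloisField 2 2) ⧸
      Subgroup.center (Matrix.SpecialLinearGroup (Fin 3) (GaloisField 2 2)))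
    (hg : orderOf g = 7) :
    ∃ n : ℕ, 1 < n ∧ n < 7 ∧ IsConj g (g ^ n) := by
  refine ⟨2, by norm_num, by norm_num, ?_⟩
  obtain ⟨a, rfl⟩ := QuotientGroup.mk'_surjective (Subgroup.center SL3) g
  set π := QuotientGroup.mk' (Subgroup.center SL3) with hπ
  have hg7 : (π a) ^ 7 = 1 := by rw [← hg]; exact pow_orderOf_eq_one _
  have hz : a ^ 7 ∈ Subgroup.center SL3 := by
    rw [← QuotientGroup.eq_one_iff (a ^ 7)]
    rw [← map_pow] at hg7
    exact hg7
  -- every element of the center cubes to 1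
  have hz3 : (a ^ 7) ^ 3 = 1 := by
    obtain ⟨r, hr, hrz⟩ := Matrix.SpecialLinearGroup.mem_center_iff.mp hz
    apply Subtype.ext
    show ((a ^ 7) ^ 3 : SL3).val = _
    rw [Matrix.SpecialLinearGroup.coe_pow, ← hrz]
    rw [Matrix.SpecialLinearGroup.coe_one]
    rw [← map_pow]
    simp only [Fintype.card_fin] at hr
    rw [hr, _root_.map_one]
  set c := a ^ 15 with hc
  have hc7 : c ^ 7 = 1 := by
    rw [hc, ← pow_mul]
    have : a ^ (15 * 7) = ((a ^ 7) ^ 3) ^ 5 := by rw [← pow_mul, ← pow_mul]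
    rw [this, hz3, one_pow]
  have hπc : π c = π a := by
    rw [hc, map_pow]
    have : (15 : ℕ) = 7 * 2 + 1 := by norm_num
    rw [this, pow_add, pow_mul, hg7, one_pow, one_mul, pow_one]
  have hcnc : c ∉ Subgroup.center SL3 := by
    intro h
    have h1 : π c = 1 := (QuotientGroup.eq_one_iff c).mpr h
    rw [hπc] at h1
    rw [hπ] at h1
    have : orderOf (π a) = 1 := by rw [hπ, h1, orderOf_one]
    rw [hg] at this
    norm_num at this
  -- matrix level
  set M : Matrix (Fin 3) (Fin 3) F := (c : SL3).val with hM
  have hM7 : M ^ 7 = 1 := by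
    rw [hM, ← Matrix.SpecialLinearGroup.coe_pow, hc7, Matrix.SpecialLinearGroup.coe_one]
  have hns : ∀ r : F, M ≠ r • 1 := by
    intro r h
    apply hcnc
    rw [Matrix.SpecialLinearGroup.mem_center_iff]
    refine ⟨r, ?_, ?_⟩
    · have hdet : M.det = 1 := (c : SL3).property
      rw [h] at hdet
      rw [Matrix.det_smul, Matrix.det_one, mul_one, Fintype.card_fin] at hdet
      simpa using hdet
    · have hsc : (Matrix.scalar (Fin 3)) r = r • (1 : Matrix (Fin 3) (Fin 3) F) := by
        ext i j
        simp only [Matrix.scalar_apply, Matrix.diagonal_apply, Matrix.smul_apply,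
          Matrix.one_apply, smul_eq_mul]
        split <;> simp
      rw [hsc]
      exact h.symm
  obtain ⟨u, hu1, hu2⟩ := PSL34.conj_step M hM7 hns
  set usl : SL3 := ⟨u, hu1⟩ with husl
  have hkey : usl * c * usl⁻¹ = c ^ 2 := by
    have h1 : usl * c = c ^ 2 * usl := by
      apply Subtype.ext
      show ((usl * c : SL3)).val = ((c ^ 2 * usl : SL3)).val
      rw [Matrix.SpecialLinearGroup.coe_mul, Matrix.SpecialLinearGroup.coe_mul,
        Matrix.SpecialLinearGroup.coe_pow]
      exact hu2
    rw [h1, mul_inv_cancel_right]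
  have hconj : IsConj c (c ^ 2) := isConj_iff.mpr ⟨usl, hkey⟩
  have := π.map_isConj hconj
  rw [hπc, map_pow, hπc] at this
  exact this
end
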